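/- arXiv:1610.04523 — 4 statements merged into one kernel-verified Lean document; each statement's English description precedes it below -/
import Mathlib

section
/- Let Φ be a minimal unsatisfiable 2CNF formula. If Φ contains a unit clause, then Φ is in MU(1), i.e., Φ is minimal unsatisfiable and its deficiency (number of clauses minus number of variables) equals 1. -/
/-! Basic definitions: literals, clauses, CNF formulas. -/

/-- A literal is a variable together with a polarity. -/
abbrev Lit (V : Type) : Type := V × Bool

/-- Negation of a literal. -/
def Lit.neg {V : Type} (l : Lit V) : Lit V := (l.1, !l.2)

/-- A clause is a finite set of literals (a disjunction). -/
abbrev Clause (V : Type) : Type := Finset (Lit V)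

/-- A CNF formula is a finite set of clauses (a conjunction). -/
abbrev CNF (V : Type) : Type := Finset (Clause V)

section BasicDefs

variable {V : Type} [DecidableEq V]

/-- A literal holds under a Boolean assignment. -/
def Lit.holds (a : V → Bool) (l : Lit V) : Prop := a l.1 = l.2

/-- A clause holds under an assignment if some literal in it holds. -/
def Clause.holds (a : V → Bool) (C : Clause V) : Prop := ∃ l ∈ C, Lit.holds a l

/-- A CNF formula is satisfiable. -/
def CNF.sat (Φ : CNF V) : Prop := ∃ a : V → Bool, ∀ C ∈ Φ, Clause.holds a C

/-- A CNF formula is unsatisfiable. -/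
def CNF.unsat (Φ : CNF V) : Prop := ¬ CNF.sat Φ

/-- A CNF formula is minimal unsatisfiable: it is unsatisfiable and every
proper subformula is satisfiable. -/
def CNF.minUnsat (Φ : CNF V) : Prop :=
  CNF.unsat Φ ∧ ∀ Ψ : CNF V, Ψ ⊂ Φ → CNF.sat Ψ

/-- The set of variables occurring in a formula. -/
def CNF.vars (Φ : CNF V) : Finset V := Φ.biUnion (fun C => C.image Prod.fst)

/-- The deficiency of a formula: number of clauses minus number of variables. -/
def CNF.deficiency (Φ : CNF V) : ℤ := (Φ.card : ℤ) - ((CNF.vars Φ).card : ℤ)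

/-- MU(1): minimal unsatisfiable with deficiency 1. -/
def CNF.MU1 (Φ : CNF V) : Prop := CNF.minUnsat Φ ∧ CNF.deficiency Φ = 1

/-- A 2CNF formula: every clause has at most 2 literals. -/
def CNF.is2CNF (Φ : CNF V) : Prop := ∀ C ∈ Φ, C.card ≤ 2

/-- `R` is the resolvent of `C1` and `C2` upon the matching variable `x`. -/
def IsResolvent (C1 C2 R : Clause V) (x : V) : Prop :=
  (x, true) ∈ C1 ∧ (x, false) ∈ C2 ∧
    R = (C1.erase (x, true)) ∪ (C2.erase (x, false))

/-- One step of read-once resolution on a multiset of clauses: the two parent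
clauses are removed from the current multiset and the resolvent is added. -/
def RORStep (S T : Multiset (Clause V)) : Prop :=
  ∃ (C1 C2 R : Clause V) (x : V),
    C1 ∈ S ∧ C2 ∈ S.erase C1 ∧ IsResolvent C1 C2 R x ∧
    T = R ::ₘ ((S.erase C1).erase C2)

/-- Read-once derivability of the clause `π` from the multiset of clauses `S`. -/
def RORDeriv (S : Multiset (Clause V)) (π : Clause V) : Prop :=
  ∃ T : Multiset (Clause V), Relation.ReflTransGen RORStep S T ∧ π ∈ T

/-- The formula `Φ` has a read-once resolution refutation. -/
def CNF.hasROR (Φ : CNF V) : Prop := RORDeriv (Φ.val) (∅ : Clause V)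

end BasicDefs

/-- A resolution step: two parent clauses, a matching variable and a resolvent. -/
structure RStep (V : Type) where
  c1 : Clause V
  c2 : Clause V
  mv : V
  res : Clause V

section MoreDefs

variable {V : Type} [DecidableEq V]

/-- Validity of a resolution step. -/
def RStep.valid (s : RStep V) : Prop := IsResolvent s.c1 s.c2 s.res s.mv

/-- A list of resolution steps is a resolution derivation from `Φ`: each step is a
valid resolution step whose parents are clauses of `Φ` or resolvents of earlier steps. -/
def IsResDeriv (Φ : CNF V) (L : List (RStep V)) : Prop :=
  ∀ (i : ℕ) (h : i < L.length),
    RStep.valid (L.get ⟨i, h⟩) ∧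
    ((L.get ⟨i, h⟩).c1 ∈ Φ ∨
      ∃ j, ∃ _ : j < i, (L.get ⟨j, by omega⟩).res = (L.get ⟨i, h⟩).c1) ∧
    ((L.get ⟨i, h⟩).c2 ∈ Φ ∨
      ∃ j, ∃ _ : j < i, (L.get ⟨j, by omega⟩).res = (L.get ⟨i, h⟩).c2)

/-- `Φ` has a Var-ROR refutation: a resolution refutation in which every variable
is used at most once as a matching variable. -/
def CNF.hasVarROR (Φ : CNF V) : Prop :=
  ∃ L : List (RStep V), IsResDeriv Φ L ∧ (L.map RStep.mv).Nodup ∧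
    ∃ s ∈ L, s.res = (∅ : Clause V)

/-- `(Fx, Fnx)` is a splitting of `Φ` over the variable `x`: `Fx` consists of all clauses
of `Φ` containing the literal `x` with that literal removed, together with some clauses of
`Φ` not containing `x` nor `¬x` (and symmetrically for `Fnx` with `¬x`), and both `Fx` and
`Fnx` are minimal unsatisfiable. -/
def IsSplitting (Φ : CNF V) (x : V) (Fx Fnx : CNF V) : Prop :=
  ∃ S1 S2 : CNF V,
    S1 ⊆ Φ ∧ S2 ⊆ Φ ∧
    (∀ C ∈ S1, (x, true) ∉ C ∧ (x, false) ∉ C) ∧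
    (∀ C ∈ S2, (x, true) ∉ C ∧ (x, false) ∉ C) ∧
    Fx = ((Φ.filter (fun C => (x, true) ∈ C)).image (fun C => C.erase (x, true))) ∪ S1 ∧
    Fnx = ((Φ.filter (fun C => (x, false) ∈ C)).image (fun C => C.erase (x, false))) ∪ S2 ∧
    CNF.minUnsat Fx ∧ CNF.minUnsat Fnx

/-- A disjunctive splitting: a splitting where `Fx` and `Fnx` have no clause `σ_i`
(clause of `Φ` mentioning neither `x` nor `¬x`) in common. -/
def IsDisjSplitting (Φ : CNF V) (x : V) (Fx Fnx : CNF V) : Prop :=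
  ∃ S1 S2 : CNF V,
    S1 ⊆ Φ ∧ S2 ⊆ Φ ∧ Disjoint S1 S2 ∧
    (∀ C ∈ S1, (x, true) ∉ C ∧ (x, false) ∉ C) ∧
    (∀ C ∈ S2, (x, true) ∉ C ∧ (x, false) ∉ C) ∧
    Fx = ((Φ.filter (fun C => (x, true) ∈ C)).image (fun C => C.erase (x, true))) ∪ S1 ∧
    Fnx = ((Φ.filter (fun C => (x, false) ∈ C)).image (fun C => C.erase (x, false))) ∪ S2 ∧
    CNF.minUnsat Fx ∧ CNF.minUnsat Fnx

end MoreDefs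

/-! In a minimal unsatisfiable formula a unit clause `{l}` subsumes every
other clause containing `l`, so setting `l` true amounts to deleting `{l}` and erasing `¬l`
from the remaining clauses. The result is again minimal unsatisfiable, loses exactly one
clause and one variable, and, for a 2CNF formula, again has a clause with at most one
literal (some clause must contain `¬l`). Iterating until the empty clause appears leaves
`{∅}`, of deficiency 1. -/

section UnitPropagation

variable {V : Type}

theorem Lit.neg_ne (l : Lit V) : l.neg ≠ l := by
  obtain ⟨x, b⟩ := l
  cases b <;> simp [Lit.neg]

theorem Lit.eq_or_eq_neg_of_fst_eq {m l : Lit V} (h : m.1 = l.1) : m = l ∨ m = l.neg := by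
  obtain ⟨x, b⟩ := l
  obtain ⟨y, c⟩ := m
  cases b <;> cases c <;> simp_all [Lit.neg]

theorem Lit.not_holds_neg {a : V → Bool} {l : Lit V} (h : Lit.holds a l) :
    ¬ Lit.holds a l.neg := by
  cases hb : l.2 <;> simp_all [Lit.holds, Lit.neg]

variable [DecidableEq V]

theorem Lit.holds_update_of_fst_ne {a : V → Bool} {m : Lit V} {x : V} (c : Bool)
    (h : m.1 ≠ x) : Lit.holds (Function.update a x c) m ↔ Lit.holds a m := by
  simp only [Lit.holds, Function.update_of_ne h]

theorem Clause.holds_erase_neg {a : V → Bool} {C : Clause V} {l : Lit V}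
    (hC : Clause.holds a C) (hl : Lit.holds a l) : Clause.holds a (C.erase l.neg) := by
  obtain ⟨m, hm, hma⟩ := hC
  exact ⟨m, Finset.mem_erase.2 ⟨fun h => Lit.not_holds_neg hl (h ▸ hma), hm⟩, hma⟩

namespace CNF.minUnsat

variable {Φ : CNF V}

theorem eq_of_unsat (hΦ : Φ.minUnsat) {Ψ : CNF V} (hΨ : Ψ ⊆ Φ) (hu : Ψ.unsat) :
    Ψ = Φ := by
  by_contra hne
  exact hu (hΦ.2 Ψ (ssubset_of_subset_of_ne hΨ hne))

theorem eq_of_subset (hΦ : Φ.minUnsat) {C D : Clause V} (hC : C ∈ Φ) (hD : D ∈ Φ)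
    (hCD : C ⊆ D) : C = D := by
  by_contra hne
  obtain ⟨a, ha⟩ := hΦ.2 (Φ.erase D) (Finset.erase_ssubset hD)
  refine hΦ.1 ⟨a, fun E hE => ?_⟩
  by_cases hED : E = D
  · obtain ⟨m, hm, hma⟩ := ha C (Finset.mem_erase.2 ⟨hne, hC⟩)
    exact ⟨m, hED ▸ hCD hm, hma⟩
  · exact ha E (Finset.mem_erase.2 ⟨hED, hE⟩)

theorem injOn_erase (hΦ : Φ.minUnsat) (n : Lit V) :
    Set.InjOn (fun C : Clause V => C.erase n) Φ := by
  have of_notMem : ∀ C ∈ Φ, ∀ D ∈ Φ, C.erase n = D.erase n → n ∉ D → C = D := by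
    intro C hC D hD h hn
    rw [Finset.erase_eq_of_notMem hn] at h
    exact (hΦ.eq_of_subset hD hC (h ▸ Finset.erase_subset n C)).symm
  intro C hC D hD h
  by_cases hnD : n ∈ D
  · by_cases hnC : n ∈ C
    · exact Finset.erase_injOn' n hnC hnD h
    · exact (of_notMem D hD C hC h.symm hnC).symm
  · exact of_notMem C hC D hD h hnD

end CNF.minUnsat

/-- Assigning `l` true in a formula in which `{l}` is the only clause containing `l`. -/
def CNF.propagateUnit (Φ : CNF V) (l : Lit V) : CNF V :=
  (Φ.erase {l}).image (fun C => C.erase l.neg)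

namespace CNF

variable {Φ : CNF V} {l : Lit V}

theorem is2CNF.propagateUnit (h2 : Φ.is2CNF) : (Φ.propagateUnit l).is2CNF := by
  intro D hD
  obtain ⟨C, hC, rfl⟩ := Finset.mem_image.1 hD
  exact Finset.card_erase_le.trans (h2 C (Finset.mem_of_mem_erase hC))

theorem sat_of_sat_propagateUnit (hl : ∀ C ∈ Φ, l ∈ C → C = {l})
    (hsat : (Φ.propagateUnit l).sat) : Φ.sat := by
  obtain ⟨a, ha⟩ := hsat
  refine ⟨Function.update a l.1 l.2, fun C hC => ?_⟩
  by_cases hCl : C = {l}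
  · exact ⟨l, hCl ▸ Finset.mem_singleton_self l, by simp [Lit.holds]⟩
  · obtain ⟨m, hm, hma⟩ :=
      ha _ (Finset.mem_image_of_mem _ (Finset.mem_erase.2 ⟨hCl, hC⟩))
    obtain ⟨hmn, hmC⟩ := Finset.mem_erase.1 hm
    have hmx : m.1 ≠ l.1 := fun h =>
      (Lit.eq_or_eq_neg_of_fst_eq h).elim (fun h => hCl (hl C hC (h ▸ hmC))) hmn
    exact ⟨m, hmC, (Lit.holds_update_of_fst_ne l.2 hmx).2 hma⟩

namespace minUnsat

variable (hΦ : Φ.minUnsat) (hl : {l} ∈ Φ)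
include hΦ hl

theorem eq_singleton_of_mem {C : Clause V} (hC : C ∈ Φ) (hlC : l ∈ C) : C = {l} :=
  (hΦ.eq_of_subset hl hC (Finset.singleton_subset_iff.2 hlC)).symm

theorem minUnsat_propagateUnit : (Φ.propagateUnit l).minUnsat := by
  refine ⟨fun hsat => hΦ.1 (sat_of_sat_propagateUnit
    (fun _ hC hlC => hΦ.eq_singleton_of_mem hl hC hlC) hsat), fun Ψ hΨ => ?_⟩
  obtain ⟨_, hDΦ', hDΨ⟩ := Finset.exists_of_ssubset hΨ
  obtain ⟨C, hC, rfl⟩ := Finset.mem_image.1 hDΦ'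
  obtain ⟨hCl, hCΦ⟩ := Finset.mem_erase.1 hC
  obtain ⟨a, ha⟩ := hΦ.2 (Φ.erase C) (Finset.erase_ssubset hCΦ)
  obtain ⟨_, hm, hma⟩ := ha {l} (Finset.mem_erase.2 ⟨Ne.symm hCl, hl⟩)
  have hla : Lit.holds a l := Finset.mem_singleton.1 hm ▸ hma
  refine ⟨a, fun D hD => ?_⟩
  obtain ⟨C', hC', rfl⟩ := Finset.mem_image.1 (hΨ.subset hD)
  have hC'C : C' ≠ C := by rintro rfl; exact hDΨ hD
  exact Clause.holds_erase_neg
    (ha C' (Finset.mem_erase.2 ⟨hC'C, Finset.mem_of_mem_erase hC'⟩)) hla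

theorem card_propagateUnit : (Φ.propagateUnit l).card + 1 = Φ.card := by
  rw [propagateUnit, Finset.card_image_of_injOn
    ((hΦ.injOn_erase l.neg).mono (Finset.erase_subset _ _)), Finset.card_erase_add_one hl]

theorem vars_propagateUnit : (Φ.propagateUnit l).vars = Φ.vars.erase l.1 := by
  ext y
  simp only [vars, propagateUnit, Finset.mem_biUnion, Finset.mem_image, Finset.mem_erase]
  constructor
  · rintro ⟨_, ⟨C, ⟨hCl, hC⟩, rfl⟩, m, hm, rfl⟩
    obtain ⟨hmn, hmC⟩ := Finset.mem_erase.1 hm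
    refine ⟨fun h => ?_, C, hC, m, hmC, rfl⟩
    exact (Lit.eq_or_eq_neg_of_fst_eq h).elim
      (fun h => hCl (hΦ.eq_singleton_of_mem hl hC (h ▸ hmC))) hmn
  · rintro ⟨hyl, C, hC, m, hm, rfl⟩
    have hCl : C ≠ {l} := by
      rintro rfl
      exact hyl (congrArg Prod.fst (Finset.mem_singleton.1 hm))
    exact ⟨C.erase l.neg, ⟨C, ⟨hCl, hC⟩, rfl⟩, m,
      Finset.mem_erase.2 ⟨fun h => hyl (by rw [h, Lit.neg]), hm⟩, rfl⟩

theorem deficiency_propagateUnit : (Φ.propagateUnit l).deficiency = Φ.deficiency := by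
  have hx : l.1 ∈ Φ.vars :=
    Finset.mem_biUnion.2 ⟨{l}, hl, Finset.mem_image_of_mem _ (Finset.mem_singleton_self l)⟩
  have hvars := Finset.card_erase_add_one hx
  rw [← hΦ.vars_propagateUnit hl] at hvars
  have hcard := hΦ.card_propagateUnit hl
  simp only [deficiency]
  omega

theorem exists_card_le_one_propagateUnit (h2 : Φ.is2CNF) :
    ∃ D ∈ Φ.propagateUnit l, D.card ≤ 1 := by
  have hneg : ∃ C ∈ Φ, l.neg ∈ C := by
    by_contra! hno
    have hid : Φ.propagateUnit l = Φ.erase {l} :=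
      (Finset.image_congr (g := id) fun C hC =>
        Finset.erase_eq_of_notMem (hno C (Finset.mem_of_mem_erase hC))).trans Finset.image_id
    exact hΦ.minUnsat_propagateUnit hl |>.1 (hid ▸ hΦ.2 _ (Finset.erase_ssubset hl))
  obtain ⟨C, hC, hnC⟩ := hneg
  have hCl : C ≠ {l} := by
    rintro rfl
    exact Lit.neg_ne l (Finset.mem_singleton.1 hnC)
  refine ⟨C.erase l.neg, Finset.mem_image_of_mem _ (Finset.mem_erase.2 ⟨hCl, hC⟩), ?_⟩
  have := h2 C hC
  rw [Finset.card_erase_of_mem hnC]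
  omega

end minUnsat

theorem minUnsat.deficiency_eq_one (hΦ : Φ.minUnsat) (h2 : Φ.is2CNF)
    (hshort : ∃ C ∈ Φ, C.card ≤ 1) : Φ.deficiency = 1 := by
  induction hn : Φ.card using Nat.strong_induction_on generalizing Φ with
  | _ n ih =>
    obtain ⟨C, hC, hC1⟩ := hshort
    rcases Nat.le_one_iff_eq_zero_or_eq_one.1 hC1 with hC0 | hC1
    · obtain rfl := Finset.card_eq_zero.1 hC0
      have hempty : ({∅} : CNF V) = Φ :=
        hΦ.eq_of_unsat (Finset.singleton_subset_iff.2 hC) fun ⟨_, ha⟩ => by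
          simpa [Clause.holds] using ha ∅ (Finset.mem_singleton_self _)
      subst hempty
      simp [deficiency, vars]
    · obtain ⟨l, rfl⟩ := Finset.card_eq_one.1 hC1
      rw [← hΦ.deficiency_propagateUnit hC]
      exact ih _ (hn ▸ hΦ.card_propagateUnit hC ▸ Nat.lt_succ_self _)
        (hΦ.minUnsat_propagateUnit hC) h2.propagateUnit
        (hΦ.exists_card_le_one_propagateUnit hC h2) rfl

end CNF

end UnitPropagation

/-- A minimal unsatisfiable 2CNF formula containing a unit clause
is in MU(1). -/
theorem stmt0 {V : Type} [DecidableEq V] (Φ : CNF V)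
    (h2 : CNF.is2CNF Φ) (hmu : CNF.minUnsat Φ)
    (hunit : ∃ C ∈ Φ, C.card = 1) :
    CNF.MU1 Φ := by
  obtain ⟨C, hC, hC1⟩ := hunit
  exact ⟨hmu, hmu.deficiency_eq_one h2 ⟨C, hC, hC1.le⟩⟩
end

section
/- Every 2CNF formula in MU(1) has a read-once resolution refutation. -/
/-!
An MU(1) formula with `n` variables has `n + 1` clauses, so in 2CNF it has at most `2n + 2`
literal occurrences, while every variable of a minimal unsatisfiable formula occurs in both
polarities. Hence, unless the empty clause is present, some variable `x` occurs exactly once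
positively (in `C₁`) and once negatively (in `C₂`): otherwise every variable occurs at least three
times, which forces two variables and three clauses all mentioning both, and such a formula is
satisfiable. Replacing `C₁` and `C₂` by their resolvent eliminates `x`, keeps the formula in 2CNF
and in MU(1), and removes one clause; since this resolution step uses `C₁` and `C₂` once each, a
read-once refutation of the smaller formula extends to one of the original formula.
-/

open Finset Function

theorem CNF.sat.mono {V : Type} {Φ Ψ : CNF V} (hΨ : Ψ ⊆ Φ) (hΦ : Φ.sat) : Ψ.sat :=
  let ⟨a, ha⟩ := hΦ
  ⟨a, fun C hC => ha C (hΨ hC)⟩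

section ReadOnceResolution

variable {V : Type} [DecidableEq V]

theorem CNF.mem_vars {Φ : CNF V} {x : V} : x ∈ Φ.vars ↔ ∃ C ∈ Φ, ∃ b, (x, b) ∈ C := by
  simp [CNF.vars]

theorem Clause.holds_update_iff {C : Clause V} {x : V} (hC : ∀ b, (x, b) ∉ C) (a : V → Bool)
    (b : Bool) : Clause.holds (update a x b) C ↔ Clause.holds a C := by
  refine exists_congr fun l => and_congr_right fun hl => ?_
  have hlx : l.1 ≠ x := fun h => hC l.2 (h ▸ hl)
  simp only [Lit.holds, update_of_ne hlx]

theorem CNF.minUnsat.exists_falsifying_of_mem {Φ : CNF V} (h : Φ.minUnsat) {C : Clause V}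
    (hC : C ∈ Φ) : ∃ a : V → Bool, (∀ D ∈ Φ, D ≠ C → Clause.holds a D) ∧ ¬ Clause.holds a C := by
  obtain ⟨a, ha⟩ := h.2 _ (erase_ssubset hC)
  refine ⟨a, fun D hD hDC => ha D (mem_erase.2 ⟨hDC, hD⟩), fun hCa => h.1 ⟨a, fun D hD => ?_⟩⟩
  by_cases hDC : D = C
  · exact hDC ▸ hCa
  · exact ha D (mem_erase.2 ⟨hDC, hD⟩)

theorem CNF.minUnsat.notMem_of_mem {Φ : CNF V} (h : Φ.minUnsat) {C : Clause V} (hC : C ∈ Φ)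
    {x : V} {b : Bool} (hb : (x, b) ∈ C) : (x, !b) ∉ C := by
  obtain ⟨a, -, ha⟩ := h.exists_falsifying_of_mem hC
  intro hnb
  cases hax : a x <;> cases b <;> first
    | exact ha ⟨_, hb, hax⟩ | exact ha ⟨_, hnb, hax⟩

theorem CNF.minUnsat.exists_mem_of_mem_vars {Φ : CNF V} (h : Φ.minUnsat) {x : V}
    (hx : x ∈ Φ.vars) (b : Bool) : ∃ C ∈ Φ, (x, b) ∈ C := by
  by_contra! hb
  obtain ⟨C, hC, c, hc⟩ := CNF.mem_vars.1 hx
  have hcb : c = !b := by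
    cases b <;> cases c <;> first | rfl | exact absurd hc (hb C hC)
  obtain ⟨a, ha, haC⟩ := h.exists_falsifying_of_mem hC
  refine h.1 ⟨update a x c, fun D hD => ?_⟩
  by_cases hDC : D = C
  · exact ⟨(x, c), hDC ▸ hc, by simp [Lit.holds]⟩
  · obtain ⟨l, hl, hla⟩ := ha D hD hDC
    refine ⟨l, hl, ?_⟩
    obtain ⟨y, d⟩ := l
    by_cases hyx : y = x
    · subst hyx
      have hdc : d = c := by
        cases b <;> cases d <;> simp_all
      simp [Lit.holds, hdc]
    · simpa [Lit.holds, update_of_ne hyx] using hla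

def CNF.occ (Φ : CNF V) (l : Lit V) : ℕ := #(Φ.filter (l ∈ ·))

theorem CNF.sum_occ_add_occ (Φ : CNF V) :
    ∑ x ∈ Φ.vars, (Φ.occ (x, true) + Φ.occ (x, false)) = ∑ C ∈ Φ, #C := by
  have hcount := sum_card_bipartiteAbove_eq_sum_card_bipartiteBelow
    (s := Φ.vars ×ˢ (univ : Finset Bool)) (t := Φ) (r := fun l C => l ∈ C)
  simp only [bipartiteAbove, bipartiteBelow, sum_product, Fintype.sum_bool] at hcount
  refine hcount.trans (sum_congr rfl fun C hC => ?_)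
  rw [filter_mem_eq_inter, inter_eq_right.2]
  exact fun l hl => mem_product.2 ⟨CNF.mem_vars.2 ⟨C, hC, l.2, hl⟩, mem_univ _⟩

theorem CNF.minUnsat.occ_add_occ_eq_card_filter {Φ : CNF V} (h : Φ.minUnsat) (x : V) :
    Φ.occ (x, true) + Φ.occ (x, false) = #(Φ.filter fun C => (x, true) ∈ C ∨ (x, false) ∈ C) := by
  rw [filter_or, card_union_of_disjoint]
  · rfl
  · exact disjoint_filter.2 fun C hC hxC => h.notMem_of_mem hC hxC

theorem CNF.minUnsat.occ_add_occ_le_card {Φ : CNF V} (h : Φ.minUnsat) (x : V) :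
    Φ.occ (x, true) + Φ.occ (x, false) ≤ #Φ :=
  h.occ_add_occ_eq_card_filter x ▸ card_filter_le _ _

theorem CNF.minUnsat.mem_or_mem_of_occ_add_occ_eq_card {Φ : CNF V} (h : Φ.minUnsat) {x : V}
    (hx : Φ.occ (x, true) + Φ.occ (x, false) = #Φ) : ∀ C ∈ Φ, (x, true) ∈ C ∨ (x, false) ∈ C :=
  card_filter_eq_iff.1 (h.occ_add_occ_eq_card_filter x ▸ hx)

theorem CNF.minUnsat.one_le_occ {Φ : CNF V} (h : Φ.minUnsat) {x : V} (hx : x ∈ Φ.vars)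
    (b : Bool) : 1 ≤ Φ.occ (x, b) :=
  let ⟨C, hC, hb⟩ := h.exists_mem_of_mem_vars hx b
  card_pos.2 ⟨C, mem_filter.2 ⟨hC, hb⟩⟩

theorem Clause.mem_of_decide_ne {C : Clause V} {x : V} (hx : (x, true) ∈ C ∨ (x, false) ∈ C)
    {b : Bool} (h : decide ((x, true) ∈ C) ≠ b) : (x, !b) ∈ C := by
  cases b <;> simp_all

/-- Each clause mentioning both `x` and `y` is falsified by only one of the four assignments
of `x` and `y`, so fewer than four such clauses leave one assignment satisfying them all. -/
theorem CNF.sat_of_card_lt_four {Φ : CNF V} {x y : V} (hxy : x ≠ y)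
    (hx : ∀ C ∈ Φ, (x, true) ∈ C ∨ (x, false) ∈ C) (hy : ∀ C ∈ Φ, (y, true) ∈ C ∨ (y, false) ∈ C)
    (hcard : #Φ < 4) : Φ.sat := by
  let sign : Clause V → Bool × Bool := fun C => (decide ((x, true) ∈ C), decide ((y, true) ∈ C))
  obtain ⟨⟨b, c⟩, -, hbc⟩ := exists_mem_notMem_of_card_lt_card (s := Φ.image sign) (t := univ)
    (card_image_le.trans_lt hcard)
  refine ⟨fun v => if v = x then !b else !c, fun C hC => ?_⟩
  by_cases hxb : decide ((x, true) ∈ C) = b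
  · have hyc : decide ((y, true) ∈ C) ≠ c := fun hyc =>
      hbc (mem_image.2 ⟨C, hC, by simp only [sign, hxb, hyc]⟩)
    exact ⟨_, Clause.mem_of_decide_ne (hy C hC) hyc, by simp [Lit.holds, hxy.symm]⟩
  · exact ⟨_, Clause.mem_of_decide_ne (hx C hC) hxb, by simp [Lit.holds]⟩

theorem CNF.unsat.vars_nonempty {Φ : CNF V} (h : Φ.unsat) (hempty : ∅ ∉ Φ) :
    Φ.vars.Nonempty := by
  obtain ⟨C, hC⟩ : Φ.Nonempty := nonempty_iff_ne_empty.2 fun hΦ => h ⟨fun _ => true, by simp [hΦ]⟩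
  obtain ⟨l, hl⟩ := nonempty_iff_ne_empty.2 fun hC' => hempty (hC' ▸ hC)
  exact ⟨l.1, CNF.mem_vars.2 ⟨C, hC, l.2, hl⟩⟩

theorem CNF.MU1.exists_filter_eq_singleton {Φ : CNF V} (h2 : Φ.is2CNF) (h : Φ.MU1)
    (hempty : ∅ ∉ Φ) : ∃ x C₁ C₂, Φ.filter ((x, true) ∈ ·) = {C₁} ∧
      Φ.filter ((x, false) ∈ ·) = {C₂} := by
  suffices ∃ x, Φ.occ (x, true) = 1 ∧ Φ.occ (x, false) = 1 by
    obtain ⟨x, hpos, hneg⟩ := this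
    obtain ⟨C₁, hC₁⟩ := card_eq_one.1 hpos
    obtain ⟨C₂, hC₂⟩ := card_eq_one.1 hneg
    exact ⟨x, C₁, C₂, hC₁, hC₂⟩
  by_contra! hcon
  have hcard : #Φ = #Φ.vars + 1 := by
    have := h.2
    unfold CNF.deficiency at this
    omega
  have hocc : ∀ x ∈ Φ.vars, 3 ≤ Φ.occ (x, true) + Φ.occ (x, false) := fun x hx => by
    have := hcon x
    have := h.1.one_le_occ hx true
    have := h.1.one_le_occ hx false
    omega
  have hsum : 3 * #Φ.vars ≤ 2 * #Φ := calc
    3 * #Φ.vars = ∑ _x ∈ Φ.vars, 3 := by simp [mul_comm]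
    _ ≤ ∑ x ∈ Φ.vars, (Φ.occ (x, true) + Φ.occ (x, false)) := sum_le_sum hocc
    _ = ∑ C ∈ Φ, #C := Φ.sum_occ_add_occ
    _ ≤ ∑ _C ∈ Φ, 2 := sum_le_sum h2
    _ = 2 * #Φ := by simp [mul_comm]
  obtain ⟨z, hz⟩ := h.1.1.vars_nonempty hempty
  have := (hocc z hz).trans (h.1.occ_add_occ_le_card z)
  -- Hence `Φ` has two variables and three clauses, each mentioning both variables.
  obtain ⟨x, y, hxy, hvars⟩ := card_eq_two.1 (by omega : #Φ.vars = 2)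
  have hmentions : ∀ z ∈ Φ.vars, ∀ C ∈ Φ, (z, true) ∈ C ∨ (z, false) ∈ C := fun z hz =>
    h.1.mem_or_mem_of_occ_add_occ_eq_card
      (le_antisymm (h.1.occ_add_occ_le_card z) (by have := hocc z hz; omega))
  exact h.1.1 (CNF.sat_of_card_lt_four hxy (hmentions x (by simp [hvars]))
    (hmentions y (by simp [hvars])) (by omega))

def Clause.resolvent (C₁ C₂ : Clause V) (x : V) : Clause V :=
  C₁.erase (x, true) ∪ C₂.erase (x, false)

theorem Clause.holds_resolvent {C₁ C₂ : Clause V} {a : V → Bool} (h₁ : Clause.holds a C₁)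
    (h₂ : Clause.holds a C₂) (x : V) : Clause.holds a (C₁.resolvent C₂ x) := by
  obtain ⟨l₁, hl₁, ha₁⟩ := h₁
  obtain ⟨l₂, hl₂, ha₂⟩ := h₂
  by_cases hx₁ : l₁ = (x, true)
  · by_cases hx₂ : l₂ = (x, false)
    · subst hx₁ hx₂
      exact absurd (ha₁.symm.trans ha₂) Bool.noConfusion
    · exact ⟨l₂, mem_union_right _ (mem_erase.2 ⟨hx₂, hl₂⟩), ha₂⟩
  · exact ⟨l₁, mem_union_left _ (mem_erase.2 ⟨hx₁, hl₁⟩), ha₁⟩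

theorem Clause.card_resolvent_add_two_le {C₁ C₂ : Clause V} {x : V} (hx₁ : (x, true) ∈ C₁)
    (hx₂ : (x, false) ∈ C₂) : #(C₁.resolvent C₂ x) + 2 ≤ #C₁ + #C₂ := by
  have := card_union_le (C₁.erase (x, true)) (C₂.erase (x, false))
  rw [card_erase_of_mem hx₁, card_erase_of_mem hx₂] at this
  have := card_pos.2 ⟨_, hx₁⟩
  have := card_pos.2 ⟨_, hx₂⟩
  unfold Clause.resolvent
  omega

theorem Clause.notMem_resolvent {C₁ C₂ : Clause V} {x : V} (h₁ : (x, false) ∉ C₁)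
    (h₂ : (x, true) ∉ C₂) (b : Bool) : (x, b) ∉ C₁.resolvent C₂ x := by
  cases b <;> simp_all [Clause.resolvent]

/-- Davis–Putnam elimination of `x` when `C₁` and `C₂` are the only clauses containing `x`
and `¬x`. -/
def CNF.replaceByResolvent (Φ : CNF V) (C₁ C₂ : Clause V) (x : V) : CNF V :=
  insert (C₁.resolvent C₂ x) ((Φ.erase C₁).erase C₂)

theorem CNF.mem_of_filter_eq_singleton {Φ : CNF V} {l : Lit V} {C : Clause V}
    (hl : Φ.filter (l ∈ ·) = {C}) : C ∈ Φ ∧ l ∈ C :=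
  mem_filter.1 (hl ▸ mem_singleton_self C)

theorem CNF.eq_of_filter_eq_singleton {Φ : CNF V} {l : Lit V} {C D : Clause V}
    (hl : Φ.filter (l ∈ ·) = {C}) (hD : D ∈ Φ) (hlD : l ∈ D) : D = C :=
  mem_singleton.1 (hl ▸ mem_filter.2 ⟨hD, hlD⟩)

section Elimination

variable {Φ : CNF V} {C₁ C₂ : Clause V} {x : V}

theorem CNF.mem_replaceByResolvent_of_mem {D : Clause V} (hD : D ∈ Φ) (h₁ : D ≠ C₁)
    (h₂ : D ≠ C₂) : D ∈ Φ.replaceByResolvent C₁ C₂ x :=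
  mem_insert_of_mem (mem_erase.2 ⟨h₂, mem_erase.2 ⟨h₁, hD⟩⟩)

theorem CNF.minUnsat.notMem_vars_replaceByResolvent (h : Φ.minUnsat)
    (hpos : Φ.filter ((x, true) ∈ ·) = {C₁}) (hneg : Φ.filter ((x, false) ∈ ·) = {C₂}) :
    x ∉ (Φ.replaceByResolvent C₁ C₂ x).vars := by
  obtain ⟨hC₁, hx₁⟩ := CNF.mem_of_filter_eq_singleton hpos
  obtain ⟨hC₂, hx₂⟩ := CNF.mem_of_filter_eq_singleton hneg
  rintro hx
  obtain ⟨E, hE, b, hb⟩ := CNF.mem_vars.1 hx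
  rcases mem_insert.1 hE with rfl | hE
  · exact Clause.notMem_resolvent (h.notMem_of_mem hC₁ hx₁) (h.notMem_of_mem hC₂ hx₂) b hb
  · obtain ⟨hE₂, hE₁, hE⟩ : E ≠ C₂ ∧ E ≠ C₁ ∧ E ∈ Φ := by simpa using hE
    cases b
    · exact hE₂ (CNF.eq_of_filter_eq_singleton hneg hE hb)
    · exact hE₁ (CNF.eq_of_filter_eq_singleton hpos hE hb)

theorem CNF.sat_of_sat_replaceByResolvent (hx₁ : (x, true) ∈ C₁) (hx₂ : (x, false) ∈ C₂)
    (hx : x ∉ (Φ.replaceByResolvent C₁ C₂ x).vars) (hsat : (Φ.replaceByResolvent C₁ C₂ x).sat) :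
    Φ.sat := by
  obtain ⟨a, ha⟩ := hsat
  have hfree : ∀ E ∈ Φ.replaceByResolvent C₁ C₂ x, ∀ b, (x, b) ∉ E :=
    fun E hE b hb => hx (CNF.mem_vars.2 ⟨E, hE, b, hb⟩)
  have hrest : ∀ b, ∀ D ∈ Φ, D ≠ C₁ → D ≠ C₂ → Clause.holds (update a x b) D :=
    fun b D hD h₁ h₂ => by
      have hD' := CNF.mem_replaceByResolvent_of_mem (x := x) hD h₁ h₂
      exact (Clause.holds_update_iff (hfree D hD') a b).2 (ha D hD')
  -- Some literal `l` of the resolvent holds; `x` is then set to satisfy the other parent.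
  obtain ⟨l, hl, hla⟩ := ha _ (mem_insert_self _ _)
  have hlx : l.1 ≠ x := fun hlx => hfree _ (mem_insert_self _ _) l.2 (hlx ▸ hl)
  have hla' : ∀ b, Lit.holds (update a x b) l := fun b => by
    simpa [Lit.holds, update_of_ne hlx] using hla
  rcases mem_union.1 hl with hl₁ | hl₂
  · refine ⟨update a x false, fun D hD => ?_⟩
    by_cases h₁ : D = C₁
    · exact ⟨l, h₁ ▸ mem_of_mem_erase hl₁, hla' false⟩
    by_cases h₂ : D = C₂
    · exact ⟨_, h₂ ▸ hx₂, by simp [Lit.holds]⟩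
    exact hrest false D hD h₁ h₂
  · refine ⟨update a x true, fun D hD => ?_⟩
    by_cases h₂ : D = C₂
    · exact ⟨l, h₂ ▸ mem_of_mem_erase hl₂, hla' true⟩
    by_cases h₁ : D = C₁
    · exact ⟨_, h₁ ▸ hx₁, by simp [Lit.holds]⟩
    exact hrest true D hD h₁ h₂

theorem CNF.minUnsat.sat_of_ssubset_replaceByResolvent (h : Φ.minUnsat) (hC₁ : C₁ ∈ Φ)
    (hC₂ : C₂ ∈ Φ) {Ψ : CNF V} (hΨ : Ψ ⊂ Φ.replaceByResolvent C₁ C₂ x) : Ψ.sat := by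
  obtain ⟨D, hD, hDΨ⟩ := exists_of_ssubset hΨ
  rcases mem_insert.1 hD with rfl | hD
  · refine (h.2 _ (erase_ssubset hC₁)).mono fun E hE => ?_
    rcases mem_insert.1 (hΨ.subset hE) with rfl | hE'
    · exact absurd hE hDΨ
    · exact mem_of_mem_erase hE'
  · obtain ⟨hD₂, hD₁, hD⟩ : D ≠ C₂ ∧ D ≠ C₁ ∧ D ∈ Φ := by simpa using hD
    obtain ⟨a, ha⟩ := h.2 _ (erase_ssubset hD)
    refine ⟨a, fun E hE => ?_⟩
    rcases mem_insert.1 (hΨ.subset hE) with rfl | hE'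
    · exact Clause.holds_resolvent (ha C₁ (mem_erase.2 ⟨hD₁.symm, hC₁⟩))
        (ha C₂ (mem_erase.2 ⟨hD₂.symm, hC₂⟩)) x
    · exact ha E (mem_erase.2 ⟨fun hED => hDΨ (hED ▸ hE),
        mem_of_mem_erase (mem_of_mem_erase hE')⟩)

theorem CNF.minUnsat.replaceByResolvent (h : Φ.minUnsat)
    (hpos : Φ.filter ((x, true) ∈ ·) = {C₁}) (hneg : Φ.filter ((x, false) ∈ ·) = {C₂}) :
    (Φ.replaceByResolvent C₁ C₂ x).minUnsat := by
  obtain ⟨hC₁, hx₁⟩ := CNF.mem_of_filter_eq_singleton hpos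
  obtain ⟨hC₂, hx₂⟩ := CNF.mem_of_filter_eq_singleton hneg
  exact ⟨fun hsat => h.1 (CNF.sat_of_sat_replaceByResolvent hx₁ hx₂
    (h.notMem_vars_replaceByResolvent hpos hneg) hsat),
    fun _ => h.sat_of_ssubset_replaceByResolvent hC₁ hC₂⟩

theorem CNF.minUnsat.resolvent_notMem (h : Φ.minUnsat)
    (hpos : Φ.filter ((x, true) ∈ ·) = {C₁}) (hneg : Φ.filter ((x, false) ∈ ·) = {C₂}) :
    C₁.resolvent C₂ x ∉ (Φ.erase C₁).erase C₂ := by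
  intro hR
  apply (h.replaceByResolvent hpos hneg).1
  rw [CNF.replaceByResolvent, insert_eq_of_mem hR]
  exact h.2 _ ((erase_subset _ _).trans_ssubset
    (erase_ssubset (CNF.mem_of_filter_eq_singleton hpos).1))

theorem CNF.minUnsat.ne_of_filter_eq_singleton (h : Φ.minUnsat)
    (hpos : Φ.filter ((x, true) ∈ ·) = {C₁}) (hneg : Φ.filter ((x, false) ∈ ·) = {C₂}) :
    C₂ ≠ C₁ := by
  obtain ⟨hC₁, hx₁⟩ := CNF.mem_of_filter_eq_singleton hpos
  rintro rfl
  exact h.notMem_of_mem hC₁ hx₁ (CNF.mem_of_filter_eq_singleton hneg).2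

theorem CNF.minUnsat.card_replaceByResolvent (h : Φ.minUnsat)
    (hpos : Φ.filter ((x, true) ∈ ·) = {C₁}) (hneg : Φ.filter ((x, false) ∈ ·) = {C₂}) :
    #(Φ.replaceByResolvent C₁ C₂ x) + 1 = #Φ := by
  rw [CNF.replaceByResolvent, card_insert_of_notMem (h.resolvent_notMem hpos hneg),
    card_erase_add_one (mem_erase.2 ⟨h.ne_of_filter_eq_singleton hpos hneg,
      (CNF.mem_of_filter_eq_singleton hneg).1⟩),
    card_erase_add_one (CNF.mem_of_filter_eq_singleton hpos).1]

theorem CNF.vars_replaceByResolvent (hC₁ : C₁ ∈ Φ) (hC₂ : C₂ ∈ Φ)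
    (hx : x ∉ (Φ.replaceByResolvent C₁ C₂ x).vars) :
    (Φ.replaceByResolvent C₁ C₂ x).vars = Φ.vars.erase x := by
  ext y
  by_cases hyx : y = x
  · subst hyx
    simp [hx]
  simp only [mem_erase, hyx, ne_eq, not_false_eq_true, true_and, CNF.mem_vars]
  constructor
  · rintro ⟨E, hE, b, hb⟩
    rcases mem_insert.1 hE with rfl | hE
    · rcases mem_union.1 hb with hb | hb
      exacts [⟨C₁, hC₁, b, mem_of_mem_erase hb⟩, ⟨C₂, hC₂, b, mem_of_mem_erase hb⟩]
    · exact ⟨E, mem_of_mem_erase (mem_of_mem_erase hE), b, hb⟩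
  · rintro ⟨D, hD, b, hb⟩
    have hne : ∀ c, (y, b) ≠ (x, c) := fun c hyb => hyx (Prod.ext_iff.1 hyb).1
    by_cases h₁ : D = C₁
    · exact ⟨_, mem_insert_self _ _, b, mem_union_left _ (mem_erase.2 ⟨hne _, h₁ ▸ hb⟩)⟩
    by_cases h₂ : D = C₂
    · exact ⟨_, mem_insert_self _ _, b, mem_union_right _ (mem_erase.2 ⟨hne _, h₂ ▸ hb⟩)⟩
    exact ⟨D, CNF.mem_replaceByResolvent_of_mem hD h₁ h₂, b, hb⟩

theorem CNF.MU1.replaceByResolvent (h : Φ.MU1)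
    (hpos : Φ.filter ((x, true) ∈ ·) = {C₁}) (hneg : Φ.filter ((x, false) ∈ ·) = {C₂}) :
    (Φ.replaceByResolvent C₁ C₂ x).MU1 := by
  obtain ⟨hC₁, hx₁⟩ := CNF.mem_of_filter_eq_singleton hpos
  have hcard := h.1.card_replaceByResolvent hpos hneg
  have hvars := CNF.vars_replaceByResolvent hC₁ (CNF.mem_of_filter_eq_singleton hneg).1
    (h.1.notMem_vars_replaceByResolvent hpos hneg)
  have hx : x ∈ Φ.vars := CNF.mem_vars.2 ⟨C₁, hC₁, true, hx₁⟩
  refine ⟨h.1.replaceByResolvent hpos hneg, ?_⟩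
  have hdef := h.2
  have hvcard := card_erase_add_one hx
  unfold CNF.deficiency at hdef ⊢
  rw [hvars]
  omega

theorem CNF.is2CNF.replaceByResolvent (h2 : Φ.is2CNF) (hC₁ : C₁ ∈ Φ) (hC₂ : C₂ ∈ Φ)
    (hx₁ : (x, true) ∈ C₁) (hx₂ : (x, false) ∈ C₂) :
    (Φ.replaceByResolvent C₁ C₂ x).is2CNF := by
  intro E hE
  rcases mem_insert.1 hE with rfl | hE
  · have := Clause.card_resolvent_add_two_le hx₁ hx₂
    have := h2 C₁ hC₁
    have := h2 C₂ hC₂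
    omega
  · exact h2 E (mem_of_mem_erase (mem_of_mem_erase hE))

theorem rorStep_replaceByResolvent (hC₁ : C₁ ∈ Φ) (hC₂ : C₂ ∈ Φ.erase C₁)
    (hx₁ : (x, true) ∈ C₁) (hx₂ : (x, false) ∈ C₂)
    (hR : C₁.resolvent C₂ x ∉ (Φ.erase C₁).erase C₂) :
    RORStep Φ.val (Φ.replaceByResolvent C₁ C₂ x).val := by
  refine ⟨C₁, C₂, _, x, hC₁, by rwa [← erase_val], ⟨hx₁, hx₂, rfl⟩, ?_⟩
  rw [CNF.replaceByResolvent, insert_val, Multiset.ndinsert_of_notMem hR, erase_val, erase_val,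
    Clause.resolvent]

theorem CNF.minUnsat.hasROR_of_hasROR_replaceByResolvent (h : Φ.minUnsat)
    (hpos : Φ.filter ((x, true) ∈ ·) = {C₁}) (hneg : Φ.filter ((x, false) ∈ ·) = {C₂})
    (hROR : (Φ.replaceByResolvent C₁ C₂ x).hasROR) : Φ.hasROR := by
  obtain ⟨hC₁, hx₁⟩ := CNF.mem_of_filter_eq_singleton hpos
  obtain ⟨hC₂, hx₂⟩ := CNF.mem_of_filter_eq_singleton hneg
  obtain ⟨T, hT, hmem⟩ := hROR
  exact ⟨T, .head (rorStep_replaceByResolvent hC₁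
    (mem_erase.2 ⟨h.ne_of_filter_eq_singleton hpos hneg, hC₂⟩) hx₁ hx₂
    (h.resolvent_notMem hpos hneg)) hT, hmem⟩

end Elimination

end ReadOnceResolution

/-- Every 2CNF formula in MU(1) has a read-once resolution refutation. -/
theorem stmt11 {V : Type} [DecidableEq V] (Φ : CNF V)
    (h2 : CNF.is2CNF Φ) (h : CNF.MU1 Φ) :
    CNF.hasROR Φ := by
  by_cases hempty : (∅ : Clause V) ∈ Φ
  · exact ⟨Φ.val, .refl, hempty⟩
  obtain ⟨x, C₁, C₂, hpos, hneg⟩ := h.exists_filter_eq_singleton h2 hempty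
  obtain ⟨hC₁, hx₁⟩ := CNF.mem_of_filter_eq_singleton hpos
  obtain ⟨hC₂, hx₂⟩ := CNF.mem_of_filter_eq_singleton hneg
  have hcard := h.1.card_replaceByResolvent hpos hneg
  exact h.1.hasROR_of_hasROR_replaceByResolvent hpos hneg
    (stmt11 _ (h2.replaceByResolvent hC₁ hC₂ hx₁ hx₂) (h.replaceByResolvent hpos hneg))
termination_by #Φ
decreasing_by omega
end

section
/- Every unsatisfiable 2CNF formula Φ has copy complexity at most 2: there exists a multiset Φ' of clauses such that every clause of Φ' is a clause of Φ, every clause of Φ appears at most twice in Φ', and Φ' has a read-once resolution refutation. Equivalently, Φ has a resolution refutation in which each input clause is used in at most two resolution steps. -/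
/-! A clause `¬u ∨ v` of a 2CNF is an edge `u → v` of the implication graph, and also the opposite
edge `¬v → ¬u`. If `Φ` has no empty clause and no literal `y` with `y →* ¬y →* y`, making true every
literal reachable from a literal that does not reach its own negation satisfies the clauses it
touches, and recursing on the untouched clauses yields a model. So an unsatisfiable `Φ` has such a
contradictory cycle. Resolving along a walk `u →* w` read-once derives a subclause of `¬u ∨ w`, so
the two halves of the cycle give subclauses of `¬y` and of `y`, hence `∅`. Finally, a shortest
contradictory cycle uses every clause at most twice: a third use either repeats an edge inside one
half, and the loop between the repetitions can be cut out, or it meets the two opposite edges of the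
clause in the other half and closes a shorter contradictory cycle. -/

open Relation

namespace Lit

variable {V : Type}

@[simp] theorem neg_neg (l : Lit V) : l.neg.neg = l := by
  simp [Lit.neg]

theorem neg_ne_self (l : Lit V) : l.neg ≠ l := by
  simp [Lit.neg, Prod.ext_iff]

theorem neg_injective : Function.Injective (Lit.neg : Lit V → Lit V) :=
  Function.LeftInverse.injective neg_neg

end Lit

section ForceTrue

variable {V : Type}

-- `(x, !a x)` is the literal on `x` that `a` falsifies.
def forceTrue (S : Lit V → Prop) [DecidablePred S] (a : V → Bool) : V → Bool :=
  fun x => if S (x, !a x) then !a x else a x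

theorem holds_forceTrue_of_mem {S : Lit V → Prop} [DecidablePred S]
    (hS : ∀ p, S p → ¬S p.neg) (a : V → Bool) {p : Lit V} (hp : S p) :
    Lit.holds (forceTrue S a) p := by
  obtain ⟨x, b⟩ := p
  have := hS _ hp
  unfold Lit.holds forceTrue Lit.neg at *
  cases b <;> cases a x <;> simp_all

theorem holds_forceTrue_of_not_mem_neg {S : Lit V → Prop} [DecidablePred S] {a : V → Bool}
    {p : Lit V} (hp : ¬S p.neg) (ha : Lit.holds a p) : Lit.holds (forceTrue S a) p := by
  obtain ⟨x, b⟩ := p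
  simp only [Lit.holds, forceTrue, Lit.neg] at *
  simp [ha, hp]

end ForceTrue

namespace List

variable {α : Type*}

theorem exists_eq_append_cons_of_cons_sublist {a : α} {t l : List α} (h : a :: t <+ l) :
    ∃ l₁ l₂, l = l₁ ++ a :: l₂ ∧ t <+ l₂ := by
  obtain ⟨r₁, r₂, rfl, ha, ht⟩ := cons_sublist_iff.1 h
  obtain ⟨s, s', rfl⟩ := append_of_mem ha
  exact ⟨s, s' ++ r₂, by simp, ht.trans (sublist_append_right _ _)⟩

variable [BEq α] [LawfulBEq α]

theorem exists_eq_append_cons_append_cons_of_two_le_count {a : α} {l : List α}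
    (h : 2 ≤ l.count a) : ∃ l₁ l₂ l₃, l = l₁ ++ a :: (l₂ ++ a :: l₃) := by
  obtain ⟨l₁, l', rfl, h'⟩ :=
    exists_eq_append_cons_of_cons_sublist (replicate_sublist_iff.2 h)
  obtain ⟨l₂, l₃, rfl, -⟩ := exists_eq_append_cons_of_cons_sublist h'
  exact ⟨l₁, l₂, l₃, rfl⟩

theorem exists_eq_append_cons_append_cons_append_cons_of_three_le_count {a : α} {l : List α}
    (h : 3 ≤ l.count a) :
    ∃ l₁ l₂ l₃ l₄, l = l₁ ++ a :: (l₂ ++ a :: (l₃ ++ a :: l₄)) := by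
  obtain ⟨l₁, l', rfl, h'⟩ :=
    exists_eq_append_cons_of_cons_sublist (replicate_sublist_iff.2 h)
  obtain ⟨l₂, l'', rfl, h''⟩ := exists_eq_append_cons_of_cons_sublist h'
  obtain ⟨l₃, l₄, rfl, -⟩ := exists_eq_append_cons_of_cons_sublist h''
  exact ⟨l₁, l₂, l₃, l₄, rfl⟩

end List

section ImplicationGraph

variable {V : Type} [DecidableEq V]

def impClause (u v : Lit V) : Clause V := {u.neg, v}

@[simp] theorem mem_impClause {u v l : Lit V} :
    l ∈ impClause u v ↔ l = u.neg ∨ l = v := by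
  simp [impClause]

theorem impClause_neg_neg (u v : Lit V) : impClause v.neg u.neg = impClause u v := by
  simp [impClause, Finset.pair_comm]

theorem impClause_eq_impClause {a b a' b' : Lit V} (h : impClause a b = impClause a' b') :
    (a' = a ∧ b' = b) ∨ (a' = b.neg ∧ b' = a.neg) := by
  have h' := congrArg (fun C : Clause V => (C : Set (Lit V))) h
  simp only [impClause, Finset.coe_pair, Set.pair_eq_pair_iff] at h'
  rcases h' with ⟨h₁, h₂⟩ | ⟨h₁, h₂⟩
  · exact Or.inl ⟨Lit.neg_injective h₁.symm, h₂.symm⟩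
  · exact Or.inr ⟨by rw [h₂, Lit.neg_neg], h₁.symm⟩

def ImpEdge (Φ : CNF V) (u v : Lit V) : Prop := impClause u v ∈ Φ

variable {Φ : CNF V}

theorem ImpEdge.neg {u v : Lit V} (h : ImpEdge Φ u v) : ImpEdge Φ v.neg u.neg := by
  rwa [ImpEdge, impClause_neg_neg]

theorem reflTransGen_impEdge_mono {Ψ : CNF V} (hΦΨ : Φ ⊆ Ψ) {u v : Lit V}
    (h : ReflTransGen (ImpEdge Φ) u v) : ReflTransGen (ImpEdge Ψ) u v :=
  ReflTransGen.mono (fun _ _ e => hΦΨ e) _ _ h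

theorem reflTransGen_impEdge_neg {u v : Lit V} (h : ReflTransGen (ImpEdge Φ) u v) :
    ReflTransGen (ImpEdge Φ) v.neg u.neg := by
  induction h with
  | refl => exact .refl
  | tail _ e ih => exact ih.head e.neg

theorem exists_impEdge_of_mem (h2 : Φ.is2CNF) {C : Clause V} (hC : C ∈ Φ) {p : Lit V}
    (hp : p ∈ C) : ∃ q ∈ C, ImpEdge Φ p.neg q := by
  have hcard : (C.erase p).card ≤ 1 := by
    have := h2 C hC
    rw [Finset.card_erase_of_mem hp]
    omega
  rcases Nat.le_one_iff_eq_zero_or_eq_one.1 hcard with h | h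
  · have hCp : C = impClause p.neg p := by
      rw [← Finset.insert_erase hp, Finset.card_eq_zero.1 h]
      simp [impClause]
    exact ⟨p, hp, by rwa [ImpEdge, ← hCp]⟩
  · obtain ⟨q, hq⟩ := Finset.card_eq_one.1 h
    have hCq : C = impClause p.neg q := by
      rw [← Finset.insert_erase hp, hq]
      simp [impClause]
    exact ⟨q, by simp [hCq], by rwa [ImpEdge, ← hCq]⟩

open Classical in
theorem CNF.sat_of_sat_filter_not_reachable (h2 : Φ.is2CNF) {l₀ : Lit V}
    (hl₀ : ¬ReflTransGen (ImpEdge Φ) l₀ l₀.neg)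
    (h : CNF.sat (Φ.filter fun C => ∀ p ∈ C, ¬ReflTransGen (ImpEdge Φ) l₀ p)) :
    Φ.sat := by
  obtain ⟨a, ha⟩ := h
  set S := ReflTransGen (ImpEdge Φ) l₀
  have hS : ∀ p, S p → ¬S p.neg := fun p hp hn =>
    hl₀ (hn.trans (by simpa using reflTransGen_impEdge_neg hp))
  refine ⟨forceTrue S a, fun C hC => ?_⟩
  by_cases hC' : ∀ p ∈ C, ¬S p
  · obtain ⟨p, hp, hap⟩ := ha C (Finset.mem_filter.2 ⟨hC, hC'⟩)
    refine ⟨p, hp, holds_forceTrue_of_not_mem_neg (fun hn => ?_) hap⟩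
    obtain ⟨q, hq, e⟩ := exists_impEdge_of_mem h2 hC hp
    exact hC' q hq (hn.tail e)
  · push Not at hC'
    obtain ⟨p, hp, hSp⟩ := hC'
    exact ⟨p, hp, holds_forceTrue_of_mem hS a hSp⟩

theorem CNF.sat_of_forall_not_reachable_neg (h2 : Φ.is2CNF) (hemp : ∅ ∉ Φ)
    (h : ∀ u, ReflTransGen (ImpEdge Φ) u u.neg → ¬ReflTransGen (ImpEdge Φ) u.neg u) :
    Φ.sat := by
  induction hn : Φ.card using Nat.strong_induction_on generalizing Φ with
  | _ n ih =>
  classical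
  rcases Φ.eq_empty_or_nonempty with rfl | ⟨C₀, hC₀⟩
  · exact ⟨fun _ => true, by simp⟩
  obtain ⟨m, hm⟩ := Finset.nonempty_iff_ne_empty.2 (ne_of_mem_of_not_mem hC₀ hemp)
  -- forcing `l₀` touches `C₀`, so the recursion is on fewer clauses
  obtain ⟨l₀, hl₀, hC₀l₀⟩ : ∃ l₀, ¬ReflTransGen (ImpEdge Φ) l₀ l₀.neg ∧
      ∃ p ∈ C₀, ReflTransGen (ImpEdge Φ) l₀ p := by
    by_cases hm' : ReflTransGen (ImpEdge Φ) m m.neg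
    · obtain ⟨q, hq, e⟩ := exists_impEdge_of_mem h2 hC₀ hm
      exact ⟨m.neg, by simpa using h m hm', q, hq, .single e⟩
    · exact ⟨m, hm', m, hm, .refl⟩
  set Φ' := Φ.filter fun C => ∀ p ∈ C, ¬ReflTransGen (ImpEdge Φ) l₀ p
  have hsub : Φ' ⊆ Φ := Finset.filter_subset _ Φ
  have hlt : Φ'.card < n := by
    rw [← hn]
    refine Finset.card_lt_card (Finset.filter_ssubset.2 ⟨C₀, hC₀, ?_⟩)
    push Not
    exact hC₀l₀
  refine CNF.sat_of_sat_filter_not_reachable h2 hl₀ (ih _ hlt (fun C hC => h2 C (hsub hC))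
    (fun h₀ => hemp (hsub h₀)) (fun u hu hu' => ?_) rfl)
  exact h u (reflTransGen_impEdge_mono hsub hu) (reflTransGen_impEdge_mono hsub hu')

end ImplicationGraph

section Walks

variable {V : Type} [DecidableEq V] {Φ : CNF V}

inductive ImpWalk (Φ : CNF V) : Lit V → List (Clause V) → Lit V → Prop
  | nil (u : Lit V) : ImpWalk Φ u [] u
  | cons {u v w : Lit V} {cs : List (Clause V)} :
      ImpEdge Φ u v → ImpWalk Φ v cs w → ImpWalk Φ u (impClause u v :: cs) w

namespace ImpWalk

variable {u v w : Lit V} {cs l₁ l₂ l₃ : List (Clause V)}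

theorem append (h₁ : ImpWalk Φ u l₁ v) (h₂ : ImpWalk Φ v l₂ w) :
    ImpWalk Φ u (l₁ ++ l₂) w := by
  induction h₁ with
  | nil => exact h₂
  | cons e _ ih => exact cons e (ih h₂)

theorem eq_of_nil (h : ImpWalk Φ u [] w) : u = w := by
  cases h
  rfl

theorem forall_mem (h : ImpWalk Φ u cs w) : ∀ c ∈ cs, c ∈ Φ := by
  induction h with
  | nil => simp
  | cons e _ ih => exact List.forall_mem_cons.2 ⟨e, ih⟩

theorem of_reflTransGen (h : ReflTransGen (ImpEdge Φ) u w) : ∃ cs, ImpWalk Φ u cs w := by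
  induction h using ReflTransGen.head_induction_on with
  | refl => exact ⟨[], nil _⟩
  | head e _ ih =>
    obtain ⟨cs, h⟩ := ih
    exact ⟨_, cons e h⟩

theorem cons_neg {a b : Lit V} (e : ImpEdge Φ a b) (h : ImpWalk Φ a.neg cs w) :
    ImpWalk Φ b.neg (impClause a b :: cs) w :=
  impClause_neg_neg a b ▸ cons e.neg h

theorem exists_split {c : Clause V} (h : ImpWalk Φ u (l₁ ++ c :: l₂) w) :
    ∃ a b, c = impClause a b ∧ ImpEdge Φ a b ∧ ImpWalk Φ u l₁ a ∧
      ImpWalk Φ b l₂ w := by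
  induction l₁ generalizing u with
  | nil =>
    cases h with
    | cons e h => exact ⟨_, _, rfl, e, nil _, h⟩
  | cons d l₁ ih =>
    cases h with
    | cons e h =>
      obtain ⟨a, b, hc, e', h₁, h₂⟩ := ih h
      exact ⟨a, b, hc, e', cons e h₁, h₂⟩

-- The second traversal of `c` is either the same edge `a → b` or the opposite edge `¬b → ¬a`.
theorem shortcut_or_opposite {c : Clause V}
    (h : ImpWalk Φ u (l₁ ++ c :: (l₂ ++ c :: l₃)) w) :
    ImpWalk Φ u (l₁ ++ c :: l₃) w ∨
      ∃ a b, c = impClause a b ∧ ImpEdge Φ a b ∧ ImpWalk Φ u l₁ a ∧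
        ImpWalk Φ b l₂ b.neg ∧ ImpWalk Φ a.neg l₃ w := by
  obtain ⟨a, b, rfl, e, h₁, h₂₃⟩ := h.exists_split
  obtain ⟨a', b', hc, -, h₂, h₃⟩ := h₂₃.exists_split
  rcases impClause_eq_impClause hc with ⟨rfl, rfl⟩ | ⟨rfl, rfl⟩
  · exact Or.inl (h₁.append (cons e h₃))
  · exact Or.inr ⟨a, b, rfl, e, h₁, h₂, h₃⟩

theorem exists_shorter_of_three_le_count {c : Clause V} (h : ImpWalk Φ u cs w)
    (hc : 3 ≤ cs.count c) : ∃ cs', ImpWalk Φ u cs' w ∧ cs'.length < cs.length := by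
  obtain ⟨l₁, l₂, l₃, l₄, rfl⟩ :=
    List.exists_eq_append_cons_append_cons_append_cons_of_three_le_count hc
  rcases h.shortcut_or_opposite with h' | ⟨a, b, rfl, e, h₁, h₂, h₃₄⟩
  · exact ⟨_, h', by simp⟩
  obtain ⟨p, q, hc, -, -, h₄⟩ := h₃₄.exists_split
  rcases impClause_eq_impClause hc with ⟨rfl, rfl⟩ | ⟨rfl, rfl⟩
  · exact ⟨_, h₁.append (cons e h₄), by simp; omega⟩
  · exact ⟨_, h₁.append (cons e (h₂.append (cons_neg e h₄))), by simp⟩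

end ImpWalk

theorem exists_shorter_cycle_of_opposite {y a b : Lit V} {p₁ p₂ p₃ Q : List (Clause V)}
    (h₁ : ImpWalk Φ y p₁ a) (e : ImpEdge Φ a b) (h₂ : ImpWalk Φ b p₂ b.neg)
    (h₃ : ImpWalk Φ a.neg p₃ y.neg) (hQ : ImpWalk Φ y.neg Q y) (hc : impClause a b ∈ Q) :
    ∃ z P' Q', ImpWalk Φ z P' z.neg ∧ ImpWalk Φ z.neg Q' z ∧
      P'.length + Q'.length <
        (p₁ ++ impClause a b :: (p₂ ++ impClause a b :: p₃)).length + Q.length := by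
  obtain ⟨q₁, q₂, rfl⟩ := List.append_of_mem hc
  obtain ⟨p, q, hc', -, hq₁, hq₂⟩ := hQ.exists_split
  -- either way, `b →* ¬b` along `p₂` and `¬b → ¬a →* a → b` skip part of the old cycle
  rcases impClause_eq_impClause hc' with ⟨rfl, rfl⟩ | ⟨rfl, rfl⟩
  · refine ⟨_, p₂, _, h₂, (h₃.cons_neg e).append (hq₁.append (.cons e (.nil _))), ?_⟩
    simp
    omega
  · refine ⟨_, p₂, _, h₂, (hq₂.cons_neg e).append (h₁.append (.cons e (.nil _))), ?_⟩
    simp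
    omega

theorem exists_shorter_cycle_of_three_le_count {y : Lit V} {P Q : List (Clause V)}
    {c : Clause V} (hP : ImpWalk Φ y P y.neg) (hQ : ImpWalk Φ y.neg Q y)
    (hc : 3 ≤ (P ++ Q).count c) :
    ∃ z P' Q', ImpWalk Φ z P' z.neg ∧ ImpWalk Φ z.neg Q' z ∧
      P'.length + Q'.length < P.length + Q.length := by
  rw [List.count_append] at hc
  wlog hP₂ : 2 ≤ P.count c generalizing y P Q
  · obtain ⟨z, P', Q', h⟩ := this (y := y.neg) (P := Q) (Q := P) (by rwa [Lit.neg_neg])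
      (by rwa [Lit.neg_neg]) (by omega) (by omega)
    exact ⟨z, P', Q', h.1, h.2.1, by omega⟩
  by_cases hP₃ : 3 ≤ P.count c
  · obtain ⟨P', hP', hlt⟩ := hP.exists_shorter_of_three_le_count hP₃
    exact ⟨y, P', Q, hP', hQ, by omega⟩
  have hcQ : c ∈ Q := List.count_pos_iff.1 (by omega)
  obtain ⟨p₁, p₂, p₃, rfl⟩ := List.exists_eq_append_cons_append_cons_of_two_le_count hP₂
  rcases hP.shortcut_or_opposite with hP' | ⟨a, b, rfl, e, h₁, h₂, h₃⟩
  · exact ⟨y, _, Q, hP', hQ, by simp⟩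
  · exact exists_shorter_cycle_of_opposite h₁ e h₂ h₃ hQ hcQ

theorem exists_cycle_count_le_two {y : Lit V} {P Q : List (Clause V)}
    (hP : ImpWalk Φ y P y.neg) (hQ : ImpWalk Φ y.neg Q y) :
    ∃ z P' Q', ImpWalk Φ z P' z.neg ∧ ImpWalk Φ z.neg Q' z ∧
      ∀ c, (P' ++ Q').count c ≤ 2 := by
  induction hn : P.length + Q.length using Nat.strong_induction_on generalizing y P Q with
  | _ n ih =>
  by_cases h : ∀ c, (P ++ Q).count c ≤ 2
  · exact ⟨y, P, Q, hP, hQ, h⟩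
  push Not at h
  obtain ⟨c, hc⟩ := h
  obtain ⟨z, P', Q', hP', hQ', hlt⟩ := exists_shorter_cycle_of_three_le_count hP hQ hc
  exact ih _ (hn ▸ hlt) hP' hQ' rfl

end Walks

section ReadOnceResolution

variable {V : Type} [DecidableEq V]

theorem RORStep.add_right {S T : Multiset (Clause V)} (h : RORStep S T)
    (M : Multiset (Clause V)) : RORStep (S + M) (T + M) := by
  obtain ⟨C₁, C₂, R, x, h₁, h₂, hR, rfl⟩ := h
  refine ⟨C₁, C₂, R, x, Multiset.mem_add.2 (Or.inl h₁), ?_, hR, ?_⟩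
  · rw [Multiset.erase_add_left_pos _ h₁]
    exact Multiset.mem_add.2 (Or.inl h₂)
  · rw [Multiset.erase_add_left_pos _ h₁, Multiset.erase_add_left_pos _ h₂, Multiset.cons_add]

theorem reflTransGen_rorStep_add_right {S T : Multiset (Clause V)}
    (h : ReflTransGen RORStep S T) (M : Multiset (Clause V)) :
    ReflTransGen RORStep (S + M) (T + M) :=
  h.lift (· + M) fun _ _ h => h.add_right M

theorem reflTransGen_rorStep_add_left {S T : Multiset (Clause V)}
    (h : ReflTransGen RORStep S T) (M : Multiset (Clause V)) :
    ReflTransGen RORStep (M + S) (M + T) := by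
  simpa only [add_comm M] using reflTransGen_rorStep_add_right h M

theorem RORStep.resolve {C₁ C₂ : Clause V} {l : Lit V} (h₁ : l ∈ C₁)
    (h₂ : l.neg ∈ C₂) (S : Multiset (Clause V)) :
    RORStep (C₁ ::ₘ C₂ ::ₘ S) ((C₁.erase l ∪ C₂.erase l.neg) ::ₘ S) := by
  obtain ⟨x, _ | _⟩ := l
  · rw [Multiset.cons_swap, Finset.union_comm]
    exact ⟨C₂, C₁, _, x, Multiset.mem_cons_self _ _, by simp, ⟨h₂, h₁, rfl⟩,
      by simp [Lit.neg]⟩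
  · exact ⟨C₁, C₂, _, x, Multiset.mem_cons_self _ _, by simp, ⟨h₁, h₂, rfl⟩,
      by simp [Lit.neg]⟩

theorem RORDeriv.of_reflTransGen {S T : Multiset (Clause V)} {π : Clause V}
    (h : ReflTransGen RORStep S T) (hT : RORDeriv T π) : RORDeriv S π :=
  let ⟨U, hU, hπ⟩ := hT
  ⟨U, h.trans hU, hπ⟩

theorem rorDeriv_empty_of_subset_singleton {R₁ R₂ : Clause V} {l : Lit V}
    (h₁ : R₁ ⊆ {l}) (h₂ : R₂ ⊆ {l.neg}) (S : Multiset (Clause V)) :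
    RORDeriv (R₁ ::ₘ R₂ ::ₘ S) ∅ := by
  rcases Finset.subset_singleton_iff.1 h₁ with rfl | rfl
  · exact ⟨_, .refl, Multiset.mem_cons_self _ _⟩
  rcases Finset.subset_singleton_iff.1 h₂ with rfl | rfl
  · exact ⟨_, .refl, by simp⟩
  · exact ⟨_, .single (RORStep.resolve (Finset.mem_singleton_self l)
      (Finset.mem_singleton_self l.neg) S), by simp⟩

variable {Φ : CNF V}

-- Resolution runs from the end of the walk backwards; an edge clause `¬u ∨ v` stays unused
-- when the current resolvent has already lost `¬v`.
theorem ImpWalk.exists_reflTransGen_rorStep {u w : Lit V} {cs : List (Clause V)}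
    (h : ImpWalk Φ u cs w) (hcs : cs ≠ []) :
    ∃ R J, R ⊆ impClause u w ∧
      ReflTransGen RORStep (cs : Multiset (Clause V)) (R ::ₘ J) := by
  induction h with
  | nil => exact absurd rfl hcs
  | @cons u v w cs e htail ih =>
    rcases eq_or_ne cs [] with rfl | hne
    · obtain rfl := htail.eq_of_nil
      exact ⟨impClause u v, 0, subset_rfl, .refl⟩
    obtain ⟨R, J, hR, hsteps⟩ := ih hne
    have hsteps' :
        ReflTransGen RORStep (↑(impClause u v :: cs)) (impClause u v ::ₘ R ::ₘ J) := by
      simpa only [Multiset.singleton_add, Multiset.cons_coe] using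
        reflTransGen_rorStep_add_left hsteps {impClause u v}
    simp only [Finset.subset_iff, mem_impClause] at hR ⊢
    by_cases hv : v.neg ∈ R
    · refine ⟨_, J, fun l hl => ?_, hsteps'.tail (RORStep.resolve (by simp) hv J)⟩
      simp only [Finset.mem_union, Finset.mem_erase, mem_impClause] at hl
      rcases hl with ⟨hlv, hl | hl⟩ | ⟨hlv, hl⟩
      exacts [Or.inl hl, absurd hl hlv, Or.inr ((hR hl).resolve_left hlv)]
    · refine ⟨R, impClause u v ::ₘ J, fun l hl => Or.inr ?_, ?_⟩
      · exact (hR hl).resolve_left fun h => hv (h ▸ hl)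
      · rwa [Multiset.cons_swap] at hsteps'

theorem rorDeriv_empty_of_cycle {y : Lit V} {P Q : List (Clause V)}
    (hP : ImpWalk Φ y P y.neg) (hQ : ImpWalk Φ y.neg Q y) :
    RORDeriv (↑(P ++ Q) : Multiset (Clause V)) ∅ := by
  have hP₀ : P ≠ [] := by
    rintro rfl
    exact y.neg_ne_self hP.eq_of_nil.symm
  have hQ₀ : Q ≠ [] := by
    rintro rfl
    exact y.neg_ne_self hQ.eq_of_nil
  obtain ⟨R₁, J₁, hR₁, h₁⟩ := hP.exists_reflTransGen_rorStep hP₀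
  obtain ⟨R₂, J₂, hR₂, h₂⟩ := hQ.exists_reflTransGen_rorStep hQ₀
  have hsteps : ReflTransGen RORStep ↑(P ++ Q) (R₁ ::ₘ R₂ ::ₘ (J₁ + J₂)) := by
    rw [← Multiset.coe_add, ← Multiset.add_cons, ← Multiset.cons_add]
    exact (reflTransGen_rorStep_add_right h₁ _).trans (reflTransGen_rorStep_add_left h₂ _)
  refine RORDeriv.of_reflTransGen hsteps
    (rorDeriv_empty_of_subset_singleton (l := y.neg) ?_ ?_ _)
  · simpa [impClause] using hR₁
  · simpa [impClause] using hR₂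

end ReadOnceResolution

/-- Every unsatisfiable 2CNF formula has copy complexity at most 2:
there is a multiset of clauses of `Φ`, containing each clause of `Φ` at most twice,
which has a read-once resolution refutation. -/
theorem stmt16 {V : Type} [DecidableEq V] (Φ : CNF V)
    (h2 : CNF.is2CNF Φ) (hunsat : CNF.unsat Φ) :
    ∃ Φ' : Multiset (Clause V),
      (∀ C ∈ Φ', C ∈ Φ) ∧ (∀ C ∈ Φ, Φ'.count C ≤ 2) ∧
      RORDeriv Φ' (∅ : Clause V) := by
  by_cases hemp : ∅ ∈ Φ
  · refine ⟨{∅}, by simpa using hemp, fun C _ => ?_,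
      ⟨_, .refl, Multiset.mem_singleton_self _⟩⟩
    exact (Multiset.count_le_card _ _).trans (by simp)
  obtain ⟨y, hy, hy'⟩ :
      ∃ y, ReflTransGen (ImpEdge Φ) y y.neg ∧ ReflTransGen (ImpEdge Φ) y.neg y := by
    by_contra! h
    exact hunsat (CNF.sat_of_forall_not_reachable_neg h2 hemp h)
  obtain ⟨P, hP⟩ := ImpWalk.of_reflTransGen hy
  obtain ⟨Q, hQ⟩ := ImpWalk.of_reflTransGen hy'
  obtain ⟨z, P', Q', hP', hQ', hcount⟩ := exists_cycle_count_le_two hP hQ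
  refine ⟨↑(P' ++ Q'), fun C hC => ?_, fun C _ => by simpa using hcount C,
    rorDeriv_empty_of_cycle hP' hQ'⟩
  rcases List.mem_append.1 (Multiset.mem_coe.1 hC) with h | h
  exacts [hP'.forall_mem C h, hQ'.forall_mem C h]
end

section
/- The 2CNF formula α = {(a ∨ b), (a ∨ ¬b), (¬a ∨ b), (¬a ∨ ¬b)} has a read-once resolution refutation but has no Var-ROR refutation; hence the class of 2CNF formulas with a Var-ROR refutation is a proper subset of the class of 2CNF formulas with a read-once resolution refutation. -/
/-- The formula `α = {(a ∨ b), (a ∨ ¬b), (¬a ∨ b), (¬a ∨ ¬b)}`, with `a = 0`, `b = 1`. -/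
def alphaF : CNF ℕ :=
  {({(0, true), (1, true)} : Clause ℕ),
   ({(0, true), (1, false)} : Clause ℕ),
   ({(0, false), (1, true)} : Clause ℕ),
   ({(0, false), (1, false)} : Clause ℕ)}

/-!
A Var-ROR refutation unfolds into a resolution tree for `∅` in which nodes with the same
matching variable carry the same step. The empty root makes this tree `RootUnresolved` (no
variable of the root clause is resolved inside it), and the subtrees of such a tree inherit the
property. The two subtrees below the root of such a tree share no clause `Q`: `Q` has a literal
that is resolved upon higher up; if it is resolved above both copies, this happens at one and the
same step, giving such a pair higher up; otherwise it survives on one side into the root clause,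
or it is the root's own matching literal and the root step recurs below itself. So the leaves are
pairwise distinct, and replaying the tree on them is a read-once refutation.

For `α`, a Var-ROR refutation has at most two steps, one per variable, but the step producing
`∅` resolves two distinct unit clauses, which are not in `α` and so come from two earlier steps.
-/

section Resolution

variable {V : Type} [DecidableEq V] {C₁ C₂ R : Clause V} {x : V}

theorem IsResolvent.subset_union (h : IsResolvent C₁ C₂ R x) : R ⊆ C₁ ∪ C₂ := by
  rw [h.2.2]
  exact Finset.union_subset_union (Finset.erase_subset _ _) (Finset.erase_subset _ _)

theorem IsResolvent.mem_of_mem_left (h : IsResolvent C₁ C₂ R x) {l : Lit V} (hl : l ∈ C₁)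
    (hx : l ≠ (x, true)) : l ∈ R := by
  rw [h.2.2]
  exact Finset.mem_union_left _ (Finset.mem_erase.2 ⟨hx, hl⟩)

theorem IsResolvent.mem_of_mem_right (h : IsResolvent C₁ C₂ R x) {l : Lit V} (hl : l ∈ C₂)
    (hx : l ≠ (x, false)) : l ∈ R := by
  rw [h.2.2]
  exact Finset.mem_union_right _ (Finset.mem_erase.2 ⟨hx, hl⟩)

theorem IsResolvent.mem_of_mem_left_of_mem_right (h : IsResolvent C₁ C₂ R x) {l : Lit V}
    (h₁ : l ∈ C₁) (h₂ : l ∈ C₂) : l ∈ R := by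
  by_cases hl : l = (x, true)
  · exact h.mem_of_mem_right h₂ (by simp [hl])
  · exact h.mem_of_mem_left h₁ hl

theorem IsResolvent.eq_singletons_of_eq_empty (h : IsResolvent C₁ C₂ ∅ x) :
    C₁ = {(x, true)} ∧ C₂ = {(x, false)} := by
  obtain ⟨h₁, h₂, hR⟩ := h
  obtain ⟨e₁, e₂⟩ := Finset.union_eq_empty.1 hR.symm
  rw [Finset.erase_eq_empty_iff] at e₁ e₂
  exact ⟨e₁.resolve_left (Finset.ne_empty_of_mem h₁), e₂.resolve_left (Finset.ne_empty_of_mem h₂)⟩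

theorem RORStep.of_isResolvent (h : IsResolvent C₁ C₂ R x) (S : Multiset (Clause V)) :
    RORStep (C₁ ::ₘ C₂ ::ₘ S) (R ::ₘ S) :=
  ⟨C₁, C₂, R, x, Multiset.mem_cons_self _ _, by simp, h, by simp⟩

end Resolution

inductive RTree (V : Type) : Type
  | leaf (C : Clause V)
  | node (s : RStep V) (l r : RTree V)

namespace RTree

variable {V : Type}

def root : RTree V → Clause V
  | leaf C => C
  | node s _ _ => s.res

def leaves : RTree V → Multiset (Clause V)
  | leaf C => {C}
  | node _ l r => l.leaves + r.leaves

def steps : RTree V → Set (RStep V)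
  | leaf _ => ∅
  | node s l r => insert s (l.steps ∪ r.steps)

def size : RTree V → ℕ
  | leaf _ => 0
  | node _ l r => l.size + r.size + 1

def IsSubtree (S : RTree V) : RTree V → Prop
  | leaf C => S = leaf C
  | node s l r => S = node s l r ∨ S.IsSubtree l ∨ S.IsSubtree r

def RootUnresolved (T : RTree V) : Prop :=
  ∀ l ∈ T.root, ∀ t ∈ T.steps, t.mv ≠ l.1

theorem isSubtree_refl (T : RTree V) : T.IsSubtree T := by
  cases T <;> simp [IsSubtree]

theorem IsSubtree.size_le {S T : RTree V} (h : S.IsSubtree T) : S.size ≤ T.size := by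
  induction T with
  | leaf C => rw [h]
  | node s l r ihl ihr =>
    rcases h with rfl | h | h
    · rfl
    · have := ihl h; simp only [size]; omega
    · have := ihr h; simp only [size]; omega

theorem mem_steps_iff {t : RStep V} {T : RTree V} :
    t ∈ T.steps ↔ ∃ a b, (node t a b).IsSubtree T := by
  induction T with
  | leaf C => simp [steps, IsSubtree]
  | node s l r ihl ihr =>
    simp only [steps, Set.mem_insert_iff, Set.mem_union, ihl, ihr, IsSubtree, node.injEq]
    constructor
    · rintro (rfl | ⟨a, b, h⟩ | ⟨a, b, h⟩)
      exacts [⟨l, r, Or.inl ⟨rfl, rfl, rfl⟩⟩, ⟨a, b, Or.inr (Or.inl h)⟩, ⟨a, b, Or.inr (Or.inr h)⟩]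
    · rintro ⟨a, b, ⟨rfl, -, -⟩ | h | h⟩
      exacts [Or.inl rfl, Or.inr (Or.inl ⟨a, b, h⟩), Or.inr (Or.inr ⟨a, b, h⟩)]

theorem mem_leaves_iff {T : RTree V} {C : Clause V} : C ∈ T.leaves ↔ (leaf C).IsSubtree T := by
  induction T with
  | leaf D => simp [leaves, IsSubtree]
  | node s l r ihl ihr => simp [leaves, IsSubtree, ihl, ihr]

theorem size_lt_of_isSubtree_child {S l r : RTree V} {s : RStep V}
    (h : S.IsSubtree l ∨ S.IsSubtree r) : S.size < (node s l r).size := by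
  rcases h with h | h <;> · have := h.size_le; simp only [size]; omega

theorem ne_node_of_isSubtree_child {S l r : RTree V} {s : RStep V}
    (h : S.IsSubtree l ∨ S.IsSubtree r) : S ≠ node s l r := by
  rintro rfl
  exact lt_irrefl _ (size_lt_of_isSubtree_child h)

variable [DecidableEq V]

def Valid : RTree V → Prop
  | leaf _ => True
  | node s l r => s.valid ∧ l.root = s.c1 ∧ r.root = s.c2 ∧ l.Valid ∧ r.Valid

theorem Valid.exists_mem_root_of_isSubtree {T S : RTree V} (hT : T.Valid) (hS : S.IsSubtree T)
    (hne : S ≠ T) : ∃ y ∈ S.root, ∃ t ∈ T.steps, t.mv = y.1 := by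
  induction T with
  | leaf C => exact absurd hS hne
  | node s l r ihl ihr =>
    obtain ⟨hs, hl, hr, hlv, hrv⟩ := hT
    rcases hS with rfl | hS | hS
    · exact absurd rfl hne
    · by_cases hSl : S = l
      · exact ⟨_, hSl ▸ hl ▸ hs.1, s, Set.mem_insert _ _, rfl⟩
      · obtain ⟨y, hy, t, ht, hty⟩ := ihl hlv hS hSl
        exact ⟨y, hy, t, Or.inr (Or.inl ht), hty⟩
    · by_cases hSr : S = r
      · exact ⟨_, hSr ▸ hr ▸ hs.2.1, s, Set.mem_insert _ _, rfl⟩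
      · obtain ⟨y, hy, t, ht, hty⟩ := ihr hrv hS hSr
        exact ⟨y, hy, t, Or.inr (Or.inr ht), hty⟩

theorem Valid.mem_root_or_resolved {T N : RTree V} (hT : T.Valid) (hN : N.IsSubtree T)
    {y : Lit V} (hy : y ∈ N.root) :
    y ∈ T.root ∨ ∃ s a b, (node s a b).IsSubtree T ∧ (N.IsSubtree a ∨ N.IsSubtree b) ∧
      s.mv = y.1 := by
  induction T with
  | leaf C => rw [← hN]; exact Or.inl hy
  | node s l r ihl ihr =>
    obtain ⟨hs, hl, hr, hlv, hrv⟩ := hT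
    have lift : ∀ {a b s'} {T' : RTree V}, (node s' a b).IsSubtree T' →
        (T' = l ∨ T' = r) → (node s' a b).IsSubtree (node s l r) := by
      rintro a b s' T' h (rfl | rfl) <;> simp [IsSubtree, h]
    rcases hN with rfl | hN | hN
    · exact Or.inl hy
    · rcases ihl hlv hN with hy | ⟨s', a, b, hsub, hNab, hmv⟩
      · by_cases hyx : y = (s.mv, true)
        · exact Or.inr ⟨s, l, r, isSubtree_refl _, Or.inl hN, by rw [hyx]⟩
        · exact Or.inl (hs.mem_of_mem_left (hl ▸ hy) hyx)
      · exact Or.inr ⟨s', a, b, lift hsub (Or.inl rfl), hNab, hmv⟩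
    · rcases ihr hrv hN with hy | ⟨s', a, b, hsub, hNab, hmv⟩
      · by_cases hyx : y = (s.mv, false)
        · exact Or.inr ⟨s, l, r, isSubtree_refl _, Or.inr hN, by rw [hyx]⟩
        · exact Or.inl (hs.mem_of_mem_right (hr ▸ hy) hyx)
      · exact Or.inr ⟨s', a, b, lift hsub (Or.inr rfl), hNab, hmv⟩

section Unresolved

variable {s : RStep V} {l r : RTree V} (hT : (node s l r).Valid)
  (hinj : Set.InjOn RStep.mv (node s l r).steps) (hU : (node s l r).RootUnresolved)
include hT hinj hU

theorem mv_ne_of_isSubtree_child {s' : RStep V} {a b : RTree V}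
    (h : (node s' a b).IsSubtree l ∨ (node s' a b).IsSubtree r) : s'.mv ≠ s.mv := by
  intro hmv
  have hs' : s' ∈ (node s l r).steps := by
    rcases h with h | h
    · exact Or.inr (Or.inl (mem_steps_iff.2 ⟨a, b, h⟩))
    · exact Or.inr (Or.inr (mem_steps_iff.2 ⟨a, b, h⟩))
  obtain rfl := hinj hs' (Set.mem_insert _ _) hmv
  obtain ⟨y, hy, t, ht, hty⟩ := hT.exists_mem_root_of_isSubtree
    (by rcases h with h | h <;> simp [IsSubtree, h]) (ne_node_of_isSubtree_child h)
  exact hU y hy t ht hty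

theorem rootUnresolved_left : l.RootUnresolved := by
  intro y hy t ht hty
  by_cases hyx : y = (s.mv, true)
  · obtain ⟨a, b, hsub⟩ := mem_steps_iff.1 ht
    exact mv_ne_of_isSubtree_child hT hinj hU (Or.inl hsub) (hty.trans (by rw [hyx]))
  · exact hU y (hT.1.mem_of_mem_left (hT.2.1 ▸ hy) hyx) t (Or.inr (Or.inl ht)) hty

theorem rootUnresolved_right : r.RootUnresolved := by
  intro y hy t ht hty
  by_cases hyx : y = (s.mv, false)
  · obtain ⟨a, b, hsub⟩ := mem_steps_iff.1 ht
    exact mv_ne_of_isSubtree_child hT hinj hU (Or.inr hsub) (hty.trans (by rw [hyx]))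
  · exact hU y (hT.1.mem_of_mem_right (hT.2.2.1 ▸ hy) hyx) t (Or.inr (Or.inr ht)) hty

theorem root_ne_of_isSubtree_left_right {N₁ N₂ : RTree V} (h₁ : N₁.IsSubtree l)
    (h₂ : N₂.IsSubtree r) : N₁.root ≠ N₂.root := by
  suffices key : ∀ n, ∀ N₁ N₂ : RTree V, l.size + r.size - (N₁.size + N₂.size) = n →
      N₁.IsSubtree l → N₂.IsSubtree r → N₁.root ≠ N₂.root from key _ N₁ N₂ rfl h₁ h₂
  intro n
  induction n using Nat.strong_induction_on with
  | _ n ih =>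
  intro N₁ N₂ hn h₁ h₂ hQ
  obtain ⟨hs, hl, hr, hlv, hrv⟩ := id hT
  obtain ⟨y, hy, t, ht, hty⟩ := hT.exists_mem_root_of_isSubtree
    (Or.inr (Or.inl h₁)) (ne_node_of_isSubtree_child (Or.inl h₁))
  have hyR : y ∉ s.res := fun h => hU y h t ht hty
  rcases hlv.mem_root_or_resolved h₁ hy with hy₁ | ⟨s₁, a₁, b₁, hsub₁, hN₁, hmv₁⟩ <;>
    rcases hrv.mem_root_or_resolved h₂ (hQ ▸ hy) with hy₂ | ⟨s₂, a₂, b₂, hsub₂, hN₂, hmv₂⟩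
  · exact hyR (hs.mem_of_mem_left_of_mem_right (hl ▸ hy₁) (hr ▸ hy₂))
  · have hyx : y = (s.mv, true) := by
      by_contra hyx
      exact hyR (hs.mem_of_mem_left (hl ▸ hy₁) hyx)
    exact mv_ne_of_isSubtree_child hT hinj hU (Or.inr hsub₂) (hmv₂.trans (by rw [hyx]))
  · have hyx : y = (s.mv, false) := by
      by_contra hyx
      exact hyR (hs.mem_of_mem_right (hr ▸ hy₂) hyx)
    exact mv_ne_of_isSubtree_child hT hinj hU (Or.inl hsub₁) (hmv₁.trans (by rw [hyx]))
  · have hs₁₂ : s₁ = s₂ := hinj (Or.inr (Or.inl (mem_steps_iff.2 ⟨a₁, b₁, hsub₁⟩)))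
      (Or.inr (Or.inr (mem_steps_iff.2 ⟨a₂, b₂, hsub₂⟩))) (hmv₁.trans hmv₂.symm)
    have := size_lt_of_isSubtree_child (s := s₁) hN₁
    have := size_lt_of_isSubtree_child (s := s₂) hN₂
    have := hsub₁.size_le
    have := hsub₂.size_le
    exact ih _ (by omega) _ _ rfl hsub₁ hsub₂ (by rw [root, root, hs₁₂])

end Unresolved

theorem Valid.nodup_leaves {T : RTree V} (hT : T.Valid) (hinj : Set.InjOn RStep.mv T.steps)
    (hU : T.RootUnresolved) : T.leaves.Nodup := by
  induction T with
  | leaf C => exact Multiset.nodup_singleton C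
  | node s l r ihl ihr =>
    have hinjl : Set.InjOn RStep.mv l.steps := hinj.mono fun t ht => Or.inr (Or.inl ht)
    have hinjr : Set.InjOn RStep.mv r.steps := hinj.mono fun t ht => Or.inr (Or.inr ht)
    refine Multiset.nodup_add.2 ⟨ihl hT.2.2.2.1 hinjl (rootUnresolved_left hT hinj hU),
      ihr hT.2.2.2.2 hinjr (rootUnresolved_right hT hinj hU), Multiset.disjoint_left.2 ?_⟩
    intro C hCl hCr
    exact root_ne_of_isSubtree_left_right hT hinj hU (mem_leaves_iff.1 hCl)
      (mem_leaves_iff.1 hCr) rfl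

theorem Valid.reflTransGen_rorStep {T : RTree V} (hT : T.Valid) {S : Multiset (Clause V)}
    (hS : T.leaves ≤ S) : Relation.ReflTransGen RORStep S (T.root ::ₘ (S - T.leaves)) := by
  induction T generalizing S with
  | leaf C =>
    have hC : C ∈ S := Multiset.singleton_le.1 hS
    simp only [root, leaves, Multiset.sub_singleton, Multiset.cons_erase hC]
    rfl
  | node s l r ihl ihr =>
    obtain ⟨hs, hl, hr, hlv, hrv⟩ := hT
    have hSl : l.leaves ≤ S := le_trans (Multiset.le_add_right _ _) hS
    have hSr : r.leaves ≤ S - l.leaves := le_tsub_of_add_le_left hS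
    have hl' := ihl hlv hSl
    rw [hl] at hl'
    have hr' := ihr hrv (S := l.root ::ₘ (S - l.leaves)) (hSr.trans (Multiset.le_cons_self _ _))
    rw [Multiset.cons_sub_of_le _ hSr, tsub_tsub, Multiset.cons_swap, hl, hr] at hr'
    exact (hl'.trans hr').tail (RORStep.of_isResolvent hs _)

end RTree

section VarROR

variable {V : Type} [DecidableEq V] {Φ : CNF V} {L : List (RStep V)}

theorem IsResDeriv.exists_rTree (hd : IsResDeriv Φ L) (i : ℕ) (hi : i < L.length) :
    ∃ T : RTree V, T.root = (L.get ⟨i, hi⟩).res ∧ T.Valid ∧ (∀ C ∈ T.leaves, C ∈ Φ) ∧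
      ∀ t ∈ T.steps, t ∈ L := by
  induction i using Nat.strong_induction_on with
  | _ i ih =>
  have parent : ∀ C, (C ∈ Φ ∨ ∃ j, ∃ _ : j < i, (L.get ⟨j, by omega⟩).res = C) →
      ∃ T : RTree V, T.root = C ∧ T.Valid ∧ (∀ C ∈ T.leaves, C ∈ Φ) ∧ ∀ t ∈ T.steps, t ∈ L := by
    rintro C (hC | ⟨j, hj, rfl⟩)
    · exact ⟨.leaf C, rfl, trivial, by simpa [RTree.leaves] using hC, by simp [RTree.steps]⟩
    · exact ih j hj (by omega)
  obtain ⟨hv, h₁, h₂⟩ := hd i hi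
  obtain ⟨T₁, hr₁, hv₁, hΦ₁, hL₁⟩ := parent _ h₁
  obtain ⟨T₂, hr₂, hv₂, hΦ₂, hL₂⟩ := parent _ h₂
  refine ⟨.node (L.get ⟨i, hi⟩) T₁ T₂, rfl, ⟨hv, hr₁, hr₂, hv₁, hv₂⟩, ?_, ?_⟩
  · simpa [RTree.leaves, or_imp, forall_and] using ⟨hΦ₁, hΦ₂⟩
  · rintro t (rfl | ht | ht)
    exacts [List.get_mem _ _, hL₁ t ht, hL₂ t ht]

theorem CNF.hasROR_of_hasVarROR (h : Φ.hasVarROR) : Φ.hasROR := by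
  obtain ⟨L, hd, hnd, s, hs, hres⟩ := h
  obtain ⟨⟨i, hi⟩, rfl⟩ := List.mem_iff_get.1 hs
  obtain ⟨T, hroot, hT, hΦ, hL⟩ := hd.exists_rTree i hi
  have hinj : Set.InjOn RStep.mv T.steps := fun t ht t' ht' =>
    List.inj_on_of_nodup_map hnd (hL t ht) (hL t' ht')
  have hU : T.RootUnresolved := by
    intro y hy
    rw [hroot, hres] at hy
    exact absurd hy (Finset.notMem_empty y)
  have hle : T.leaves ≤ Φ.val := (Multiset.le_iff_subset (hT.nodup_leaves hinj hU)).2 hΦ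
  exact ⟨_, hT.reflTransGen_rorStep hle, by rw [hroot, hres]; exact Multiset.mem_cons_self _ _⟩

theorem CNF.fst_mem_vars {C : Clause V} (hC : C ∈ Φ) {y : Lit V} (hy : y ∈ C) :
    y.1 ∈ Φ.vars :=
  Finset.mem_biUnion.2 ⟨C, hC, Finset.mem_image_of_mem _ hy⟩

theorem IsResDeriv.fst_mem_vars (hd : IsResDeriv Φ L) (i : ℕ) (hi : i < L.length) :
    ∀ y ∈ (L.get ⟨i, hi⟩).c1 ∪ (L.get ⟨i, hi⟩).c2, y.1 ∈ Φ.vars := by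
  induction i using Nat.strong_induction_on with
  | _ i ih =>
  have parent : ∀ C, (C ∈ Φ ∨ ∃ j, ∃ _ : j < i, (L.get ⟨j, by omega⟩).res = C) →
      ∀ y ∈ C, y.1 ∈ Φ.vars := by
    rintro C (hC | ⟨j, hj, rfl⟩) y hy
    · exact CNF.fst_mem_vars hC hy
    · exact ih j hj (by omega) y ((hd j (by omega)).1.subset_union hy)
  obtain ⟨-, h₁, h₂⟩ := hd i hi
  intro y hy
  rcases Finset.mem_union.1 hy with hy | hy
  exacts [parent _ h₁ y hy, parent _ h₂ y hy]

theorem IsResDeriv.length_le_card_vars (hd : IsResDeriv Φ L) (hnd : (L.map RStep.mv).Nodup) :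
    L.length ≤ Φ.vars.card := by
  have hsub : L.map RStep.mv ⊆ Φ.vars.toList := by
    intro x hx
    obtain ⟨s, hs, rfl⟩ := List.mem_map.1 hx
    obtain ⟨⟨i, hi⟩, rfl⟩ := List.mem_iff_get.1 hs
    exact Finset.mem_toList.2
      (hd.fst_mem_vars i hi _ (Finset.mem_union_left _ (hd i hi).1.1))
  simpa using (hnd.subperm hsub).length_le

end VarROR

theorem alphaF_card_eq_two : ∀ C ∈ alphaF, C.card = 2 := by decide

theorem alphaF_hasROR : alphaF.hasROR := by
  let s₁ : RStep ℕ := ⟨{(0, true), (1, true)}, {(0, false), (1, true)}, 0, {(1, true)}⟩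
  let s₂ : RStep ℕ := ⟨{(0, true), (1, false)}, {(0, false), (1, false)}, 0, {(1, false)}⟩
  let T : RTree ℕ := .node ⟨{(1, true)}, {(1, false)}, 1, ∅⟩
    (.node s₁ (.leaf s₁.c1) (.leaf s₁.c2)) (.node s₂ (.leaf s₂.c1) (.leaf s₂.c2))
  have hT : T.Valid := by
    refine ⟨?_, rfl, rfl, ⟨?_, rfl, rfl, trivial, trivial⟩, ⟨?_, rfl, rfl, trivial, trivial⟩⟩ <;>
      exact ⟨by decide, by decide, by decide⟩
  have hle : T.leaves ≤ alphaF.val := by decide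
  exact ⟨_, hT.reflTransGen_rorStep hle, Multiset.mem_cons_self _ _⟩

theorem alphaF_not_hasVarROR : ¬ alphaF.hasVarROR := by
  rintro ⟨L, hd, hnd, s, hs, hres⟩
  have hlen : L.length ≤ 2 := (hd.length_le_card_vars hnd).trans_eq (by decide)
  obtain ⟨⟨i, hi⟩, rfl⟩ := List.mem_iff_get.1 hs
  obtain ⟨hv, h₁, h₂⟩ := hd i hi
  rw [RStep.valid, hres] at hv
  obtain ⟨hc₁, hc₂⟩ := hv.eq_singletons_of_eq_empty
  have hunit : ∀ y : Lit ℕ, {y} ∉ alphaF := fun y hy => by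
    simpa using alphaF_card_eq_two _ hy
  obtain ⟨j₁, hj₁, hr₁⟩ := h₁.resolve_left (hc₁ ▸ hunit _)
  obtain ⟨j₂, hj₂, hr₂⟩ := h₂.resolve_left (hc₂ ▸ hunit _)
  have hj : j₁ ≠ j₂ := by
    rintro rfl
    have := hr₁.symm.trans hr₂
    rw [hc₁, hc₂, Finset.singleton_inj] at this
    simp at this
  omega

/-- `alphaF` has a read-once resolution refutation but no Var-ROR
refutation; hence the 2CNF formulas with a Var-ROR refutation form a proper subset
of the 2CNF formulas with a read-once resolution refutation. -/
theorem stmt17 :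
    CNF.hasROR alphaF ∧ ¬ CNF.hasVarROR alphaF ∧
    {Φ : CNF ℕ | CNF.is2CNF Φ ∧ CNF.hasVarROR Φ} ⊂
      {Φ : CNF ℕ | CNF.is2CNF Φ ∧ CNF.hasROR Φ} := by
  refine ⟨alphaF_hasROR, alphaF_not_hasVarROR, ?_, fun hsub => ?_⟩
  · exact fun Φ ⟨h2, hv⟩ => ⟨h2, CNF.hasROR_of_hasVarROR hv⟩
  · have h2 : alphaF.is2CNF := fun C hC => (alphaF_card_eq_two C hC).le
    exact alphaF_not_hasVarROR (hsub ⟨h2, alphaF_hasROR⟩).2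
end
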